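/- arXiv:2311.01435 — 10 statements merged into one kernel-verified Lean document; each statement's English description precedes it below -/
import Mathlib

section
/- If f is a smooth real function whose roots (counted with multiplicity/order) number Z(f), then Z(f) ≤ Z(f') + 1, where Z(f') is the number of roots of its derivative counted with order. -/
open Finset

/-- **Z(f) ≤ Z(f') + 1.**  If `f` is a smooth real function whose roots are exactly the
finite set `S`, with the root at `x ∈ S` having finite order `m x` (i.e.
`f(x) = f'(x) = ⋯ = f^{(m x - 1)}(x) = 0` and `f^{(m x)}(x) ≠ 0`), and similarly the
roots of `f'` are exactly `S'` with orders `m'`, then the number of roots of `f`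
counted with order is at most one plus the number of roots of `f'` counted with order. -/
theorem zeros_le_zeros_deriv_add_one
    (f : ℝ → ℝ) (hf : ContDiff ℝ (⊤ : ℕ∞) f)
    (S S' : Finset ℝ) (m m' : ℝ → ℕ)
    (hS : ∀ x : ℝ, f x = 0 ↔ x ∈ S)
    (hS' : ∀ x : ℝ, deriv f x = 0 ↔ x ∈ S')
    (hm : ∀ x ∈ S, (∀ j < m x, iteratedDeriv j f x = 0) ∧ iteratedDeriv (m x) f x ≠ 0)
    (hm' : ∀ x ∈ S', (∀ j < m' x, iteratedDeriv j (deriv f) x = 0) ∧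
      iteratedDeriv (m' x) (deriv f) x ≠ 0) :
    ∑ x ∈ S, m x ≤ (∑ x ∈ S', m' x) + 1 := by
  classical
  rcases S.eq_empty_or_nonempty with rfl | hne
  · simp
  -- every root of f has order ≥ 1
  have hm1 : ∀ x ∈ S, 1 ≤ m x := by
    intro x hx
    rcases Nat.eq_zero_or_pos (m x) with h0 | h; swap
    · exact h
    · exfalso
      have := (hm x hx).2
      rw [h0, iteratedDeriv_zero] at this
      exact this ((hS x).2 hx)
  -- every root of f' has order ≥ 1
  have hm'1 : ∀ x ∈ S', 1 ≤ m' x := by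
    intro x hx
    rcases Nat.eq_zero_or_pos (m' x) with h0 | h; swap
    · exact h
    · exfalso
      have := (hm' x hx).2
      rw [h0, iteratedDeriv_zero] at this
      exact this ((hS' x).2 hx)
  -- roots of f of order ≥ 2 are roots of f' of order m x - 1
  have hdown : ∀ x ∈ S, 2 ≤ m x → x ∈ S' ∧ m' x = m x - 1 := by
    intro x hx h2
    have hd : ∀ j, iteratedDeriv j (deriv f) x = iteratedDeriv (j+1) f x := by
      intro j; rw [iteratedDeriv_succ']
    have hx' : x ∈ S' := by
      refine (hS' x).1 ?_
      have := (hm x hx).1 1 (by omega)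
      rwa [iteratedDeriv_one] at this
    refine ⟨hx', ?_⟩
    have hzero : ∀ j < m x - 1, iteratedDeriv j (deriv f) x = 0 := by
      intro j hj
      rw [hd]
      exact (hm x hx).1 (j+1) (by omega)
    have hnz : iteratedDeriv (m x - 1) (deriv f) x ≠ 0 := by
      rw [hd]
      have : m x - 1 + 1 = m x := by omega
      rw [this]
      exact (hm x hx).2
    rcases lt_trichotomy (m' x) (m x - 1) with h | h | h
    · exact absurd (hzero _ h) (hm' x hx').2
    · exact h
    · exact absurd ((hm' x hx').1 _ h) hnz
  -- setup the "next root" function and Rolle points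
  have hcont : ∀ a b : ℝ, ContinuousOn f (Set.Icc a b) := fun a b =>
    hf.continuous.continuousOn
  set M := S.max' hne with hM
  set E := S.erase M with hE
  have hnext : ∀ x ∈ E, ∃ y ∈ S, x < y ∧ ∀ z ∈ S, x < z → y ≤ z := by
    intro x hx
    have hxS : x ∈ S := mem_of_mem_erase hx
    have hxM : x < M := lt_of_le_of_ne (le_max' S x hxS) (ne_of_mem_erase hx)
    set A := S.filter (fun z => x < z) with hA
    have hAne : A.Nonempty := ⟨M, by have hMS : M ∈ S := S.max'_mem hne; simp [hA, hMS, hxM]⟩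
    refine ⟨A.min' hAne, ?_, ?_, ?_⟩
    · exact (mem_filter.1 (A.min'_mem hAne)).1
    · exact (mem_filter.1 (A.min'_mem hAne)).2
    · intro z hz hxz
      exact A.min'_le z (by simp [hA, hz, hxz])
  -- Rolle points
  have hrolle : ∀ x : ℝ, ∃ c : ℝ, x ∈ E → (x < c ∧ c ∈ S' ∧ c ∉ S ∧
      ∀ z ∈ S, x < z → c < z) := by
    intro x
    by_cases hx : x ∈ E; swap
    · exact ⟨0, fun h => absurd h hx⟩
    refine ?_
    obtain ⟨y, hyS, hxy, hymin⟩ := hnext x hx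
    have hfx : f x = 0 := (hS x).2 (mem_of_mem_erase hx)
    have hfy : f y = 0 := (hS y).2 hyS
    obtain ⟨c, hc, hc'⟩ := exists_deriv_eq_zero hxy (hcont x y) (hfx.trans hfy.symm)
    refine ⟨c, fun _ => ⟨hc.1, (hS' c).1 hc', ?_, ?_⟩⟩
    · intro hcS
      exact absurd (hymin c hcS hc.1) (not_le.2 hc.2)
    · intro z hz hxz
      exact lt_of_lt_of_le hc.2 (hymin z hz hxz)
  choose c hc using hrolle
  have hc1 : ∀ x ∈ E, x < c x := fun x hx => (hc x hx).1
  have hc2 : ∀ x ∈ E, c x ∈ S' := fun x hx => (hc x hx).2.1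
  have hc3 : ∀ x ∈ E, c x ∉ S := fun x hx => (hc x hx).2.2.1
  have hc4 : ∀ x ∈ E, ∀ z ∈ S, x < z → c x < z := fun x hx => (hc x hx).2.2.2
  -- injectivity of c
  have hcinj : ∀ x ∈ E, ∀ y ∈ E, c x = c y → x = y := by
    intro x hx y hy hcxy
    rcases lt_trichotomy x y with h | h | h
    · exfalso
      have h1 : c x < y := hc4 x hx y (mem_of_mem_erase hy) h
      have h2 : y < c y := hc1 y hy
      rw [hcxy] at h1; exact absurd h2 (not_lt.2 h1.le)
    · exact h
    · exfalso
      have h1 : c y < x := hc4 y hy x (mem_of_mem_erase hx) h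
      have h2 : x < c x := hc1 x hx
      rw [hcxy] at h2; exact absurd h2 (not_lt.2 h1.le)
  -- the counting argument
  set T := S.filter (fun x => 2 ≤ m x) with hT
  set C := E.image c with hCdef
  have hTS' : T ⊆ S' := by
    intro x hx
    rw [hT, mem_filter] at hx
    exact (hdown x hx.1 hx.2).1
  have hCS' : C ⊆ S' := by
    intro y hy
    rw [hCdef, mem_image] at hy
    obtain ⟨x, hx, rfl⟩ := hy
    exact hc2 x hx
  have hdisj : Disjoint T C := by
    rw [disjoint_left]
    intro a haT haC
    rw [hCdef, mem_image] at haC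
    obtain ⟨x, hx, rfl⟩ := haC
    rw [hT, mem_filter] at haT
    exact hc3 x hx haT.1
  have hCcard : C.card = S.card - 1 := by
    rw [hCdef, card_image_of_injOn hcinj, hE, card_erase_of_mem (S.max'_mem hne)]
  have hUsub : T ∪ C ⊆ S' := union_subset hTS' hCS'
  have step1 : ∑ x ∈ T, m' x + ∑ x ∈ C, m' x ≤ ∑ x ∈ S', m' x := by
    rw [← sum_union hdisj]
    exact sum_le_sum_of_subset hUsub
  have step2 : C.card ≤ ∑ x ∈ C, m' x := by
    calc C.card = ∑ _x ∈ C, 1 := by simp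
    _ ≤ ∑ x ∈ C, m' x := sum_le_sum fun x hx => hm'1 x (hCS' hx)
  have step3 : ∑ x ∈ T, m' x = ∑ x ∈ T, (m x - 1) := by
    refine sum_congr rfl fun x hx => ?_
    rw [hT, mem_filter] at hx
    exact (hdown x hx.1 hx.2).2
  have step4 : ∑ x ∈ S, m x = ∑ x ∈ T, (m x - 1) + S.card := by
    have h1 : ∑ x ∈ S, m x = ∑ x ∈ S, ((m x - 1) + 1) := by
      refine sum_congr rfl fun x hx => ?_
      have := hm1 x hx; omega
    rw [h1, sum_add_distrib, sum_const, smul_eq_mul, mul_one]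
    congr 1
    refine (sum_subset (filter_subset _ _) ?_).symm
    intro x hx hxT
    rw [mem_filter] at hxT
    have h2 : ¬ 2 ≤ m x := fun h => hxT ⟨hx, h⟩
    have := hm1 x hx
    omega
  have hScard : 1 ≤ S.card := card_pos.2 hne
  omega
end

section
/- Let F(α) = ∫_0^∞ a(x) e^{α x²} dx, where a is an integrable function on [0,∞). Then the number of real roots of F(α)=0 is at most the number of sign changes of a(x) on [0,∞). -/
open MeasureTheory Set Real

private lemma descartes_rolle_aux (G g : ℝ → ℝ) (hd : ∀ x, HasDerivAt G (g x) x) :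
    ∀ (k : ℕ) (s : Finset ℝ), s.card = k → (∀ x ∈ s, G x = 0) →
      ∃ u : Finset ℝ, (∀ y ∈ u, g y = 0) ∧ s.card ≤ u.card + 1 ∧
        ∀ y ∈ u, ∃ x ∈ s, y < x := by
  intro k
  induction k with
  | zero =>
    intro s hs _
    exact ⟨∅, by simp, by simp [hs], by simp⟩
  | succ m ih =>
    intro s hcard hroot
    by_cases hm : s.card ≤ 1
    · exact ⟨∅, by simp, by simpa using hm, by simp⟩
    push_neg at hm
    have hs_ne : s.Nonempty := Finset.card_pos.mp (by omega)
    set M := s.max' hs_ne with hMdef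
    have hM : M ∈ s := s.max'_mem hs_ne
    have hcard' : (s.erase M).card = m := by
      rw [Finset.card_erase_of_mem hM]; omega
    have hs'_ne : (s.erase M).Nonempty := Finset.card_pos.mp (by omega)
    set M₂ := (s.erase M).max' hs'_ne with hM2def
    have hM₂ : M₂ ∈ s.erase M := (s.erase M).max'_mem hs'_ne
    have hlt : M₂ < M := by
      have h := Finset.mem_erase.mp hM₂
      exact lt_of_le_of_ne (s.le_max' _ h.2) h.1
    obtain ⟨u, hu0, hucard, hults⟩ := ih (s.erase M) hcard'
      (fun x hx => hroot x (Finset.mem_of_mem_erase hx))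
    have hGM : G M = 0 := hroot M hM
    have hGM₂ : G M₂ = 0 := hroot M₂ (Finset.mem_of_mem_erase hM₂)
    obtain ⟨ξ, hξmem, hξ⟩ := exists_hasDerivAt_eq_zero hlt
      (fun x _ => (hd x).continuousAt.continuousWithinAt)
      (hGM₂.trans hGM.symm) (fun x _ => hd x)
    have hξu : ξ ∉ u := by
      intro hmem
      obtain ⟨x, hx, hyx⟩ := hults ξ hmem
      have hxle : x ≤ M₂ := (s.erase M).le_max' x hx
      have := hξmem.1
      linarith
    refine ⟨insert ξ u, ?_, ?_, ?_⟩
    · intro y hy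
      rcases Finset.mem_insert.mp hy with h | h
      · exact h ▸ hξ
      · exact hu0 y h
    · rw [Finset.card_insert_of_notMem hξu]
      omega
    · intro y hy
      rcases Finset.mem_insert.mp hy with h | h
      · exact ⟨M, hM, h ▸ hξmem.2⟩
      · obtain ⟨x, hx, hyx⟩ := hults y h
        exact ⟨x, Finset.mem_of_mem_erase hx, hyx⟩

private lemma descartes_rolle_count (G g : ℝ → ℝ) (hd : ∀ x, HasDerivAt G (g x) x)
    (hfin : {x | g x = 0}.Finite) :
    {x | G x = 0}.Finite ∧ {x | G x = 0}.ncard ≤ {x | g x = 0}.ncard + 1 := by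
  have key : ∀ s : Finset ℝ, ↑s ⊆ {x | G x = 0} → s.card ≤ {x | g x = 0}.ncard + 1 := by
    intro s hs
    obtain ⟨u, hu0, hc, -⟩ := descartes_rolle_aux G g hd s.card s rfl (fun x hx => hs hx)
    have hsub : (u : Set ℝ) ⊆ {x | g x = 0} := fun y hy => hu0 y hy
    have h2 := Set.ncard_le_ncard hsub hfin
    rw [Set.ncard_coe_finset] at h2
    omega
  have hfinG : {x | G x = 0}.Finite := by
    by_contra h
    obtain ⟨s, hsub, hcard⟩ :=
      (Set.Infinite.exists_subset_card_eq h ({x | g x = 0}.ncard + 2))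
    have := key s hsub
    omega
  refine ⟨hfinG, ?_⟩
  rw [Set.ncard_eq_toFinset_card _ hfinG]
  exact key _ (by simp)


private lemma descartes_base_pos (a : ℝ → ℝ)
    (hpos : ∀ x, 0 ≤ x → 0 ≤ a x)
    (hint : ∀ α : ℝ, IntegrableOn (fun x => a x * Real.exp (α * x ^ 2)) (Ici 0))
    (hne : ¬ (∀ᵐ x ∂(volume.restrict (Ici 0)), a x = 0)) (α : ℝ) :
    ∫ x in Ici 0, a x * Real.exp (α * x ^ 2) ≠ 0 := by
  intro h0
  have hae : 0 ≤ᵐ[volume.restrict (Ici 0)] fun x => a x * Real.exp (α * x ^ 2) :=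
    (ae_restrict_iff' measurableSet_Ici).mpr (Filter.Eventually.of_forall
      (fun x hx => mul_nonneg (hpos x hx) (Real.exp_pos _).le))
  have hz := (integral_eq_zero_iff_of_nonneg_ae hae (hint α)).mp h0
  apply hne
  filter_upwards [hz] with x hx
  have hx' : a x * Real.exp (α * x ^ 2) = 0 := hx
  rcases mul_eq_zero.mp hx' with h | h
  · exact h
  · exact absurd h (Real.exp_ne_zero _)

private lemma descartes_base (a : ℝ → ℝ)
    (hsign : ∀ x y : ℝ, 0 ≤ x → 0 ≤ y → 0 ≤ a x * a y)
    (hint : ∀ α : ℝ, IntegrableOn (fun x => a x * Real.exp (α * x ^ 2)) (Ici 0))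
    (hne : ¬ (∀ᵐ x ∂(volume.restrict (Ici 0)), a x = 0)) (α : ℝ) :
    ∫ x in Ici 0, a x * Real.exp (α * x ^ 2) ≠ 0 := by
  by_cases hp : ∀ x, 0 ≤ x → 0 ≤ a x
  · exact descartes_base_pos a hp hint hne α
  · push_neg at hp
    obtain ⟨x₀, hx₀, hax₀⟩ := hp
    have hneg : ∀ x, 0 ≤ x → 0 ≤ -a x := by
      intro x hx
      have := hsign x x₀ hx hx₀
      nlinarith
    have hint' : ∀ β : ℝ, IntegrableOn (fun x => (-a x) * Real.exp (β * x ^ 2)) (Ici 0) :=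
      fun β => (hint β).neg.congr (Filter.Eventually.of_forall fun x => (neg_mul _ _).symm)
    have hne' : ¬ (∀ᵐ x ∂(volume.restrict (Ici 0)), -a x = 0) := by
      intro h
      apply hne
      filter_upwards [h] with x hx
      linarith
    have h := descartes_base_pos (fun x => -a x) hneg hint' hne' α
    intro h0
    apply h
    have : (fun x => -a x * Real.exp (α * x ^ 2))
        = fun x => -(a x * Real.exp (α * x ^ 2)) := by funext x; ring
    rw [this, integral_neg, h0, neg_zero]


private lemma descartes_intB (a : ℝ → ℝ) (c : ℝ)
    (hint : ∀ α : ℝ, IntegrableOn (fun x => a x * Real.exp (α * x ^ 2)) (Ici 0)) :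
    ∀ α : ℝ, IntegrableOn (fun x => (a x * (x ^ 2 - c ^ 2)) * Real.exp (α * x ^ 2)) (Ici 0) := by
  intro α
  have hmeas : AEStronglyMeasurable (fun x => (a x * (x ^ 2 - c ^ 2)) * Real.exp (α * x ^ 2))
      (volume.restrict (Ici 0)) := by
    have h1 := (hint α).aestronglyMeasurable
    have h2 : AEStronglyMeasurable (fun x : ℝ => x ^ 2 - c ^ 2) (volume.restrict (Ici 0)) :=
      ((continuous_pow 2).sub continuous_const).aestronglyMeasurable
    exact (h1.mul h2).congr (Filter.Eventually.of_forall fun x => by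
      simp only [Pi.mul_apply]; ring)
  have i1 : IntegrableOn (fun x => |a x| * Real.exp ((α + 1) * x ^ 2)) (Ici 0) :=
    (hint (α + 1)).abs.congr (Filter.Eventually.of_forall fun x => by
      beta_reduce; rw [abs_mul, abs_of_pos (Real.exp_pos _)])
  have i2 : IntegrableOn (fun x => |a x| * Real.exp (α * x ^ 2)) (Ici 0) :=
    (hint α).abs.congr (Filter.Eventually.of_forall fun x => by
      beta_reduce; rw [abs_mul, abs_of_pos (Real.exp_pos _)])
  have gint : IntegrableOn
      (fun x => |a x| * Real.exp ((α + 1) * x ^ 2) + c ^ 2 * (|a x| * Real.exp (α * x ^ 2)))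
      (Ici 0) := i1.add (i2.const_mul (c ^ 2))
  refine Integrable.mono' gint hmeas (Filter.Eventually.of_forall fun x => ?_)
  have h1 : |x ^ 2 - c ^ 2| ≤ Real.exp (x ^ 2) + c ^ 2 := by
    have he := Real.add_one_le_exp (x ^ 2)
    rw [abs_le]
    constructor <;> nlinarith [sq_nonneg x, sq_nonneg c]
  have h2 : Real.exp ((α + 1) * x ^ 2) = Real.exp (x ^ 2) * Real.exp (α * x ^ 2) := by
    rw [← Real.exp_add]; ring_nf
  have h3 : ‖a x * (x ^ 2 - c ^ 2) * Real.exp (α * x ^ 2)‖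
      = |a x| * |x ^ 2 - c ^ 2| * Real.exp (α * x ^ 2) := by
    rw [Real.norm_eq_abs, abs_mul, abs_mul, abs_of_pos (Real.exp_pos _)]
  rw [h3]
  calc |a x| * |x ^ 2 - c ^ 2| * Real.exp (α * x ^ 2)
      ≤ |a x| * (Real.exp (x ^ 2) + c ^ 2) * Real.exp (α * x ^ 2) := by
        have := mul_le_mul_of_nonneg_left h1 (abs_nonneg (a x))
        exact mul_le_mul_of_nonneg_right this (Real.exp_pos _).le
    _ = |a x| * Real.exp ((α + 1) * x ^ 2) + c ^ 2 * (|a x| * Real.exp (α * x ^ 2)) := by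
        rw [h2]; ring

private lemma descartes_deriv (a : ℝ → ℝ) (c : ℝ)
    (hint : ∀ α : ℝ, IntegrableOn (fun x => a x * Real.exp (α * x ^ 2)) (Ici 0)) (α₀ : ℝ) :
    HasDerivAt (fun α => ∫ x in Ici 0, a x * Real.exp (α * (x ^ 2 - c ^ 2)))
      (Real.exp (-(α₀ * c ^ 2)) *
        ∫ x in Ici 0, (a x * (x ^ 2 - c ^ 2)) * Real.exp (α₀ * x ^ 2)) α₀ := by
  have hintB := descartes_intB a c hint
  set K := Real.exp ((|α₀| + 2) * c ^ 2) with hK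
  have hmeas : ∀ α : ℝ, AEStronglyMeasurable (fun x => a x * Real.exp (α * (x ^ 2 - c ^ 2)))
      (volume.restrict (Ici 0)) := by
    intro α
    refine ((hint α).aestronglyMeasurable.const_mul (Real.exp (-(α * c ^ 2)))).congr
      (Filter.Eventually.of_forall fun x => ?_)
    beta_reduce
    rw [show α * (x ^ 2 - c ^ 2) = -(α * c ^ 2) + α * x ^ 2 by ring, Real.exp_add]
    ring
  have hFint : Integrable (fun x => a x * Real.exp (α₀ * (x ^ 2 - c ^ 2)))
      (volume.restrict (Ici 0)) := by
    refine ((hint α₀).const_mul (Real.exp (-(α₀ * c ^ 2)))).congr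
      (Filter.Eventually.of_forall fun x => ?_)
    beta_reduce
    rw [show α₀ * (x ^ 2 - c ^ 2) = -(α₀ * c ^ 2) + α₀ * x ^ 2 by ring, Real.exp_add]
    ring
  have hF'meas : AEStronglyMeasurable
      (fun x => a x * ((x ^ 2 - c ^ 2) * Real.exp (α₀ * (x ^ 2 - c ^ 2))))
      (volume.restrict (Ici 0)) := by
    refine ((hintB α₀).aestronglyMeasurable.const_mul (Real.exp (-(α₀ * c ^ 2)))).congr
      (Filter.Eventually.of_forall fun x => ?_)
    beta_reduce
    rw [show α₀ * (x ^ 2 - c ^ 2) = -(α₀ * c ^ 2) + α₀ * x ^ 2 by ring, Real.exp_add]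
    ring
  have hbint : Integrable
      (fun x => |a x| * (Real.exp ((α₀ + 2) * (x ^ 2 - c ^ 2)) + K))
      (volume.restrict (Ici 0)) := by
    have i1 : IntegrableOn
        (fun x => Real.exp (-((α₀ + 2) * c ^ 2)) * |a x * Real.exp ((α₀ + 2) * x ^ 2)|)
        (Ici 0) := (hint (α₀ + 2)).abs.const_mul _
    have i2 : IntegrableOn (fun x => K * |a x * Real.exp (0 * x ^ 2)|) (Ici 0) :=
      (hint 0).abs.const_mul _
    refine (i1.add i2).congr (Filter.Eventually.of_forall fun x => ?_)
    simp only [Pi.add_apply]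
    rw [abs_mul, abs_of_pos (Real.exp_pos _), abs_mul, abs_of_pos (Real.exp_pos _),
      show (α₀ + 2) * (x ^ 2 - c ^ 2) = -((α₀ + 2) * c ^ 2) + (α₀ + 2) * x ^ 2 by ring,
      Real.exp_add]
    simp only [mul_zero, zero_mul, Real.exp_zero, mul_one]
    ring
  have hbound : ∀ᵐ x ∂(volume.restrict (Ici 0)), ∀ α ∈ Metric.ball α₀ 1,
      ‖a x * ((x ^ 2 - c ^ 2) * Real.exp (α * (x ^ 2 - c ^ 2)))‖
        ≤ |a x| * (Real.exp ((α₀ + 2) * (x ^ 2 - c ^ 2)) + K) := by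
    refine Filter.Eventually.of_forall fun x => fun α hα => ?_
    have hα1 : |α - α₀| < 1 := by rwa [Metric.mem_ball, Real.dist_eq] at hα
    set u := x ^ 2 - c ^ 2 with hu
    have hnorm : ‖a x * (u * Real.exp (α * u))‖ = |a x| * (|u| * Real.exp (α * u)) := by
      rw [Real.norm_eq_abs, abs_mul, abs_mul, abs_of_pos (Real.exp_pos _)]
    rw [hnorm]
    refine mul_le_mul_of_nonneg_left ?_ (abs_nonneg (a x))
    have h1 : |u| * Real.exp (α * u) ≤ Real.exp (|u| + α * u) := by
      have hle : |u| ≤ Real.exp |u| := by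
        have := Real.add_one_le_exp |u|; linarith
      calc |u| * Real.exp (α * u) ≤ Real.exp |u| * Real.exp (α * u) :=
            mul_le_mul_of_nonneg_right hle (Real.exp_pos _).le
        _ = Real.exp (|u| + α * u) := (Real.exp_add _ _).symm
    refine h1.trans ?_
    rcases le_or_gt 0 u with hu0 | hu0
    · have : |u| + α * u ≤ (α₀ + 2) * u := by
        rw [abs_of_nonneg hu0]
        nlinarith [abs_lt.mp hα1]
      calc Real.exp (|u| + α * u) ≤ Real.exp ((α₀ + 2) * u) := Real.exp_le_exp.mpr this
        _ ≤ Real.exp ((α₀ + 2) * u) + K := le_add_of_nonneg_right (Real.exp_pos _).le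
    · have huc : -u ≤ c ^ 2 := by
        have : 0 ≤ x ^ 2 := sq_nonneg x
        simp only [hu]; linarith
      have hc2 : 0 ≤ c ^ 2 := sq_nonneg c
      have habs : |α| ≤ |α₀| + 1 := by
        calc |α| = |α₀ + (α - α₀)| := by ring_nf
          _ ≤ |α₀| + |α - α₀| := abs_add_le _ _
          _ ≤ |α₀| + 1 := by linarith
      have hfin : |u| + α * u ≤ (|α₀| + 2) * c ^ 2 := by
        rw [abs_of_neg hu0]
        have h3 : (α - 1) * u ≤ |α - 1| * (-u) := by
          rcases le_or_gt 0 (α - 1) with h | h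
          · nlinarith [abs_of_nonneg h]
          · nlinarith [abs_of_neg h]
        have h4 : |α - 1| ≤ |α| + 1 := by
          calc |α - 1| ≤ |α| + |(1:ℝ)| := abs_sub _ _
            _ = |α| + 1 := by norm_num
        have ha0 : (0:ℝ) ≤ |α₀| := abs_nonneg _
        nlinarith [mul_le_mul_of_nonneg_right h4 (neg_nonneg.mpr hu0.le),
          mul_le_mul_of_nonneg_right habs (neg_nonneg.mpr hu0.le),
          mul_le_mul_of_nonneg_left huc (by positivity : (0:ℝ) ≤ |α₀| + 2)]
      calc Real.exp (|u| + α * u) ≤ Real.exp ((|α₀| + 2) * c ^ 2) := Real.exp_le_exp.mpr hfin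
        _ ≤ Real.exp ((α₀ + 2) * u) + K := by
            rw [hK]; exact le_add_of_nonneg_left (Real.exp_pos _).le
  have hdiff : ∀ᵐ x ∂(volume.restrict (Ici 0)), ∀ α ∈ Metric.ball α₀ 1,
      HasDerivAt (fun α => a x * Real.exp (α * (x ^ 2 - c ^ 2)))
        (a x * ((x ^ 2 - c ^ 2) * Real.exp (α * (x ^ 2 - c ^ 2)))) α := by
    refine Filter.Eventually.of_forall fun x => fun α _ => ?_
    have h1 : HasDerivAt (fun α : ℝ => α * (x ^ 2 - c ^ 2)) (x ^ 2 - c ^ 2) α :=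
      hasDerivAt_mul_const _
    have h2 := (h1.exp).const_mul (a x)
    exact h2.congr_deriv (by ring)
  have H := hasDerivAt_integral_of_dominated_loc_of_deriv_le (μ := volume.restrict (Ici 0))
    (F := fun α x => a x * Real.exp (α * (x ^ 2 - c ^ 2)))
    (F' := fun α x => a x * ((x ^ 2 - c ^ 2) * Real.exp (α * (x ^ 2 - c ^ 2))))
    (Metric.ball_mem_nhds α₀ one_pos) (Filter.Eventually.of_forall hmeas) hFint hF'meas hbound hbint hdiff
  have heq : ∫ x in Ici 0, a x * ((x ^ 2 - c ^ 2) * Real.exp (α₀ * (x ^ 2 - c ^ 2)))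
      = Real.exp (-(α₀ * c ^ 2)) * ∫ x in Ici 0, (a x * (x ^ 2 - c ^ 2)) * Real.exp (α₀ * x ^ 2) := by
    rw [← integral_const_mul]
    refine integral_congr_ae (Filter.Eventually.of_forall fun x => ?_)
    beta_reduce
    rw [show α₀ * (x ^ 2 - c ^ 2) = -(α₀ * c ^ 2) + α₀ * x ^ 2 by ring, Real.exp_add]
    ring
  rw [← heq]
  exact H.2


section Part4
variable (a : ℝ → ℝ) (n : ℕ) (t : Fin (n+1) → ℝ)

-- the key sign lemma for the mixed case
private lemma descartes_mixed
    (ht_nonneg : ∀ i, 0 ≤ t i) (ht_mono : StrictMono t)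
    (hsign : ∀ x y : ℝ, 0 ≤ x → 0 ≤ y → (∀ i, t i < x ↔ t i < y) → 0 ≤ a x * a y)
    (p q : ℝ) (hp0 : 0 ≤ p) (hq0 : 0 ≤ q)
    (hpqm : ∀ i : Fin n, t i.castSucc < p ↔ t i.castSucc < q)
    (hpc : p ≤ t (Fin.last n)) (hcq : t (Fin.last n) < q) (hpq : a p * a q < 0)
    (x y : ℝ) (hx : 0 ≤ x) (hy : 0 ≤ y)
    (hmatch : ∀ i : Fin n, t i.castSucc < x ↔ t i.castSucc < y)
    (hxc : x ≤ t (Fin.last n)) (hcy : t (Fin.last n) < y) :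
    a x * a y ≤ 0 := by
  set c := t (Fin.last n) with hc
  have htc : ∀ i : Fin (n+1), t i ≤ c := fun i => ht_mono.monotone (Fin.le_last i)
  have htc' : ∀ j : Fin n, t j.castSucc < c := fun j => ht_mono (Fin.castSucc_lt_last j)
  -- y and q match fully
  have h1 : 0 ≤ a y * a q := by
    refine hsign y q hy hq0 fun i => ?_
    constructor
    · intro _; exact lt_of_le_of_lt (htc i) hcq
    · intro _; exact lt_of_le_of_lt (htc i) hcy
  -- x and p match fully
  have h2 : 0 ≤ a x * a p := by
    refine hsign x p hx hp0 fun i => ?_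
    rcases Fin.eq_castSucc_or_eq_last i with ⟨j, rfl⟩ | rfl
    · have hxj : t j.castSucc < x := (hmatch j).mpr (lt_of_lt_of_le (htc' j) hcy.le)
      have hpj : t j.castSucc < p := (hpqm j).mpr (lt_of_lt_of_le (htc' j) hcq.le)
      exact iff_of_true hxj hpj
    · exact iff_of_false (not_lt.mpr hxc) (not_lt.mpr hpc)
  by_contra hcon
  push_neg at hcon
  have h3 : a x * a y * (a p * a q) < 0 := mul_neg_of_pos_of_neg hcon hpq
  nlinarith [mul_nonneg h2 h1]

end Part4

private lemma descartes_main : ∀ (n : ℕ) (a : ℝ → ℝ) (t : Fin n → ℝ),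
    (∀ i, 0 ≤ t i) → StrictMono t →
    (∀ x y : ℝ, 0 ≤ x → 0 ≤ y → (∀ i, t i < x ↔ t i < y) → 0 ≤ a x * a y) →
    (∀ α : ℝ, IntegrableOn (fun x => a x * Real.exp (α * x ^ 2)) (Ici 0)) →
    (¬ (∀ᵐ x ∂(volume.restrict (Ici 0)), a x = 0)) →
    {α : ℝ | ∫ x in Ici 0, a x * Real.exp (α * x ^ 2) = 0}.Finite ∧
      {α : ℝ | ∫ x in Ici 0, a x * Real.exp (α * x ^ 2) = 0}.ncard ≤ n := by
  intro n
  induction n with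
  | zero =>
    intro a t _ _ hsign hint hne
    have he : {α : ℝ | ∫ x in Ici 0, a x * Real.exp (α * x ^ 2) = 0} = ∅ := by
      ext α
      simp only [mem_setOf_eq, mem_empty_iff_false, iff_false]
      exact descartes_base a (fun x y hx hy => hsign x y hx hy (fun i => i.elim0)) hint hne α
    rw [he]
    simp
  | succ n ih =>
    intro a t ht_nonneg ht_mono hsign hint hne
    by_cases hA : ∀ x y : ℝ, 0 ≤ x → 0 ≤ y →
        (∀ i : Fin n, t i.castSucc < x ↔ t i.castSucc < y) → 0 ≤ a x * a y
    · obtain ⟨h1, h2⟩ := ih a (fun i => t i.castSucc) (fun i => ht_nonneg _)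
        (fun i j hij => ht_mono (Fin.castSucc_lt_castSucc_iff.mpr hij)) hA hint hne
      exact ⟨h1, h2.trans (Nat.le_succ n)⟩
    push_neg at hA
    obtain ⟨p', q', hp0', hq0', hm', hpq'⟩ := hA
    set c := t (Fin.last n) with hc
    have hc0 : 0 ≤ c := ht_nonneg _
    have htc' : ∀ j : Fin n, t j.castSucc < c := fun j => ht_mono (Fin.castSucc_lt_last j)
    have key : ∃ p q, 0 ≤ p ∧ 0 ≤ q ∧ (∀ i : Fin n, t i.castSucc < p ↔ t i.castSucc < q) ∧
        p ≤ c ∧ c < q ∧ a p * a q < 0 := by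
      have hnotfull : ¬ (c < p' ↔ c < q') := by
        intro hiff
        have hfull : ∀ i : Fin (n+1), t i < p' ↔ t i < q' := by
          intro i
          rcases Fin.eq_castSucc_or_eq_last i with ⟨j, rfl⟩ | rfl
          · exact hm' j
          · exact hiff
        exact absurd (hsign p' q' hp0' hq0' hfull) (not_le.mpr hpq')
      by_cases h1 : c < q'
      · have h2 : ¬ c < p' := fun h => hnotfull (iff_of_true h h1)
        exact ⟨p', q', hp0', hq0', hm', not_lt.mp h2, h1, hpq'⟩
      · have h2 : c < p' := by
          by_contra h
          exact hnotfull (iff_of_false h h1)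
        refine ⟨q', p', hq0', hp0', fun i => (hm' i).symm, not_lt.mp h1, h2, ?_⟩
        nlinarith
    obtain ⟨p, q, hp0, hq0, hpqm, hpc, hcq, hpq⟩ := key
    have hsignB : ∀ x y : ℝ, 0 ≤ x → 0 ≤ y →
        (∀ i : Fin n, t i.castSucc < x ↔ t i.castSucc < y) →
        0 ≤ (a x * (x ^ 2 - c ^ 2)) * (a y * (y ^ 2 - c ^ 2)) := by
      intro x y hx hy hmatch
      by_cases hcx : c < x ↔ c < y
      · have hfull : ∀ i : Fin (n+1), t i < x ↔ t i < y := by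
          intro i
          rcases Fin.eq_castSucc_or_eq_last i with ⟨j, rfl⟩ | rfl
          · exact hmatch j
          · exact hcx
        have h1 := hsign x y hx hy hfull
        have h2 : 0 ≤ (x ^ 2 - c ^ 2) * (y ^ 2 - c ^ 2) := by
          rcases lt_or_ge c x with h | h
          · have hcy2 : c < y := hcx.mp h
            have ha : 0 ≤ x ^ 2 - c ^ 2 := by
              nlinarith [mul_nonneg (by linarith : (0:ℝ) ≤ x - c) (by linarith : (0:ℝ) ≤ x + c)]
            have hb : 0 ≤ y ^ 2 - c ^ 2 := by
              nlinarith [mul_nonneg (by linarith : (0:ℝ) ≤ y - c) (by linarith : (0:ℝ) ≤ y + c)]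
            exact mul_nonneg ha hb
          · have hyc : y ≤ c := not_lt.mp (fun hy' => (not_lt.mpr h) (hcx.mpr hy'))
            have ha : x ^ 2 - c ^ 2 ≤ 0 := by
              nlinarith [mul_nonneg (by linarith : (0:ℝ) ≤ c - x) (by linarith : (0:ℝ) ≤ c + x)]
            have hb : y ^ 2 - c ^ 2 ≤ 0 := by
              nlinarith [mul_nonneg (by linarith : (0:ℝ) ≤ c - y) (by linarith : (0:ℝ) ≤ c + y)]
            nlinarith [mul_nonneg (by linarith : (0:ℝ) ≤ -(x ^ 2 - c ^ 2)) (by linarith : (0:ℝ) ≤ -(y ^ 2 - c ^ 2))]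
        nlinarith [mul_nonneg h1 h2]
      · by_cases hcy : c < y
        · have hxc : x ≤ c := not_lt.mp (fun h => hcx (iff_of_true h hcy))
          have haxy := descartes_mixed a n t ht_nonneg ht_mono hsign p q hp0 hq0 hpqm hpc hcq hpq
            x y hx hy hmatch hxc hcy
          have hfac : (x ^ 2 - c ^ 2) * (y ^ 2 - c ^ 2) ≤ 0 := by
            have ha : x ^ 2 - c ^ 2 ≤ 0 := by
              nlinarith [mul_nonneg (by linarith : (0:ℝ) ≤ c - x) (by linarith : (0:ℝ) ≤ c + x)]
            have hb : 0 ≤ y ^ 2 - c ^ 2 := by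
              nlinarith [mul_nonneg (by linarith : (0:ℝ) ≤ y - c) (by linarith : (0:ℝ) ≤ y + c)]
            exact mul_nonpos_of_nonpos_of_nonneg ha hb
          nlinarith [mul_nonneg (neg_nonneg.mpr haxy) (neg_nonneg.mpr hfac)]
        · have hcx2 : c < x := by
            by_contra h
            exact hcx (iff_of_false h hcy)
          have hyc : y ≤ c := not_lt.mp hcy
          have haxy := descartes_mixed a n t ht_nonneg ht_mono hsign p q hp0 hq0 hpqm hpc hcq hpq
            y x hy hx (fun i => (hmatch i).symm) hyc hcx2
          have hfac : (x ^ 2 - c ^ 2) * (y ^ 2 - c ^ 2) ≤ 0 := by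
            have ha : 0 ≤ x ^ 2 - c ^ 2 := by
              nlinarith [mul_nonneg (by linarith : (0:ℝ) ≤ x - c) (by linarith : (0:ℝ) ≤ x + c)]
            have hb : y ^ 2 - c ^ 2 ≤ 0 := by
              nlinarith [mul_nonneg (by linarith : (0:ℝ) ≤ c - y) (by linarith : (0:ℝ) ≤ c + y)]
            exact mul_nonpos_of_nonneg_of_nonpos ha hb
          nlinarith [mul_nonneg (neg_nonneg.mpr haxy) (neg_nonneg.mpr hfac)]
    have hintB := descartes_intB a c hint
    have hneB : ¬ (∀ᵐ x ∂(volume.restrict (Ici 0)), a x * (x ^ 2 - c ^ 2) = 0) := by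
      intro h
      apply hne
      have h1 : ∀ᵐ x ∂(volume.restrict (Ici 0)), x ≠ c := by
        refine ae_restrict_of_ae ?_
        rw [ae_iff]
        have hs : {x : ℝ | ¬ x ≠ c} = {c} := by ext z; simp
        rw [hs]
        exact Real.volume_singleton
      filter_upwards [h, h1, ae_restrict_mem measurableSet_Ici] with x hbx hxc hx0
      have hx0' : (0:ℝ) ≤ x := hx0
      rcases mul_eq_zero.mp hbx with h' | h'
      · exact h'
      · exfalso
        have h'' : (x - c) * (x + c) = 0 := by linear_combination h'
        rcases mul_eq_zero.mp h'' with h3 | h3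
        · exact hxc (by linarith)
        · exact hxc (by linarith)
    obtain ⟨hbfin, hbcard⟩ := ih (fun x => a x * (x ^ 2 - c ^ 2)) (fun i => t i.castSucc)
      (fun i => ht_nonneg _) (fun i j hij => ht_mono (Fin.castSucc_lt_castSucc_iff.mpr hij))
      hsignB hintB hneB
    set G := fun α : ℝ => ∫ x in Ici 0, a x * Real.exp (α * (x ^ 2 - c ^ 2)) with hG
    set g := fun α : ℝ => Real.exp (-(α * c ^ 2)) *
      ∫ x in Ici 0, (a x * (x ^ 2 - c ^ 2)) * Real.exp (α * x ^ 2) with hg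
    have hd : ∀ α, HasDerivAt G (g α) α := fun α => descartes_deriv a c hint α
    have hgroots : {α : ℝ | g α = 0}
        = {α : ℝ | ∫ x in Ici 0, (a x * (x ^ 2 - c ^ 2)) * Real.exp (α * x ^ 2) = 0} := by
      ext α
      simp only [hg, mem_setOf_eq, mul_eq_zero]
      constructor
      · rintro (h | h)
        · exact absurd h (Real.exp_ne_zero _)
        · exact h
      · exact Or.inr
    have hgfin : {α : ℝ | g α = 0}.Finite := by rw [hgroots]; exact hbfin
    obtain ⟨hGfin, hGcard⟩ := descartes_rolle_count G g hd hgfin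
    have hFG : {α : ℝ | ∫ x in Ici 0, a x * Real.exp (α * x ^ 2) = 0}
        = {α : ℝ | G α = 0} := by
      ext α
      simp only [mem_setOf_eq, hG]
      have heq : (∫ x in Ici 0, a x * Real.exp (α * (x ^ 2 - c ^ 2)))
          = Real.exp (-(α * c ^ 2)) * ∫ x in Ici 0, a x * Real.exp (α * x ^ 2) := by
        rw [← integral_const_mul]
        refine integral_congr_ae (Filter.Eventually.of_forall fun x => ?_)
        beta_reduce
        rw [show α * (x ^ 2 - c ^ 2) = -(α * c ^ 2) + α * x ^ 2 by ring, Real.exp_add]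
        ring
      rw [heq]
      constructor
      · intro h; rw [h, mul_zero]
      · intro h
        rcases mul_eq_zero.mp h with h' | h'
        · exact absurd h' (Real.exp_ne_zero _)
        · exact h'
    rw [hFG]
    have hgle : {α : ℝ | g α = 0}.ncard ≤ n := by rw [hgroots]; exact hbcard
    exact ⟨hGfin, hGcard.trans (by omega)⟩

/-- **Descartes' Rule of Signs in integral form.**  Let `a` be an integrable function on
`[0,∞)` that is not a.e. zero there, and suppose `F(α) = ∫_0^∞ a(x) e^{α x²} dx` is
well defined (the integrand is integrable) for every `α`.  If `a` has at most `n` sign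
changes on `[0,∞)` — witnessed by points `t 0 < t 1 < ⋯ < t (n-1)` in `[0,∞)` such that
`a` does not change sign on any of the pieces they cut out of `[0,∞)` — then the set of
real roots of `F` is finite, of cardinality at most `n`. -/
theorem descartes_rule_integral_form
    (a : ℝ → ℝ) (n : ℕ) (t : Fin n → ℝ)
    (ht_nonneg : ∀ i, 0 ≤ t i) (ht_mono : StrictMono t)
    (hsign : ∀ x y : ℝ, 0 ≤ x → 0 ≤ y → (∀ i, t i < x ↔ t i < y) → 0 ≤ a x * a y)
    (hint : ∀ α : ℝ, IntegrableOn (fun x => a x * Real.exp (α * x ^ 2)) (Ici 0))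
    (hne : ¬ (∀ᵐ x ∂(volume.restrict (Ici 0)), a x = 0)) :
    {α : ℝ | ∫ x in Ici 0, a x * Real.exp (α * x ^ 2) = 0}.Finite ∧
      {α : ℝ | ∫ x in Ici 0, a x * Real.exp (α * x ^ 2) = 0}.ncard ≤ n :=
  descartes_main n a t ht_nonneg ht_mono hsign hint hne
end

section
/- Let X be drawn from a symmetric isotropic logconcave density p on ℝ. Then for every t ≥ 0, P(X ≥ t) ≤ 8 p(t). -/
open MeasureTheory Set Real

lemma aux_exp_Ioi (a : ℝ) {b : ℝ} (hb : 0 < b) :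
    ∫ x in Ioi a, Real.exp (-(b * x)) = Real.exp (-(b * a)) / b := by
  have h := integral_comp_mul_left_Ioi (fun y => Real.exp (-y)) a hb
  simp only [smul_eq_mul] at h
  rw [h, integral_exp_neg_Ioi]
  ring

lemma aux_exp_int {b : ℝ} (hb : 0 < b) (a : ℝ) :
    IntegrableOn (fun x => Real.exp (-(b * x))) (Ioi a) := by
  simpa [neg_mul] using exp_neg_integrableOn_Ioi a hb

/-- **Tail bound for symmetric isotropic logconcave densities.**  If `p` is a symmetric
isotropic logconcave probability density on `ℝ`, then for all `t ≥ 0`,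
`P(X ≥ t) = ∫_t^∞ p ≤ 8 p(t)`. -/
theorem symmetric_isotropic_logconcave_tail_le
    (p : ℝ → ℝ)
    (hp_nonneg : ∀ x, 0 ≤ p x)
    (hp_int : Integrable p)
    (hp_mass : ∫ x, p x = 1)
    (hp_symm : ∀ x, p (-x) = p x)
    (hp_m2 : Integrable (fun x => x ^ 2 * p x))
    (hp_iso : ∫ x, x ^ 2 * p x = 1)
    (hp_logconcave : ∀ x y a b : ℝ, 0 ≤ a → 0 ≤ b → a + b = 1 →
      p x ^ a * p y ^ b ≤ p (a * x + b * y))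
    (t : ℝ) (ht : 0 ≤ t) :
    ∫ x in Ici t, p x ≤ 8 * p t := by
  have hub : ∀ x, p x ≤ p 0 := by
    intro x
    have h := hp_logconcave x (-x) (1/2) (1/2) (by norm_num) (by norm_num) (by norm_num)
    have harg : (1/2:ℝ) * x + (1/2:ℝ) * (-x) = 0 := by ring
    rw [harg, hp_symm x,
      ← Real.rpow_add' (hp_nonneg x) (by norm_num : (1/2:ℝ)+1/2 ≠ 0)] at h
    norm_num at h
    exact h
  have hM : (3:ℝ)/16 ≤ p 0 := by
    set s : Set ℝ := Ioo (-2 : ℝ) 2 with hs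
    have hmeas : MeasurableSet s := measurableSet_Ioo
    have hA : ∫ x in s, p x ≤ 4 * p 0 := by
      calc ∫ x in s, p x ≤ ∫ _x in s, p 0 :=
            setIntegral_mono_on hp_int.integrableOn (integrableOn_const (by simp [hs]))
              hmeas (fun x _ => hub x)
      _ = 4 * p 0 := by
          rw [setIntegral_const, hs, measureReal_def, Real.volume_Ioo]
          norm_num
    have hsplit : (∫ x in s, p x) + ∫ x in sᶜ, p x = 1 := by
      rw [integral_add_compl hmeas hp_int, hp_mass]
    have h4 : ∫ x in sᶜ, 4 * p x ≤ ∫ x in sᶜ, x ^ 2 * p x := by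
      refine setIntegral_mono_on (hp_int.const_mul 4).integrableOn hp_m2.integrableOn
        hmeas.compl (fun x hx => ?_)
      have hx4 : (4:ℝ) ≤ x ^ 2 := by
        simp only [hs, mem_compl_iff, mem_Ioo, not_and_or, not_lt] at hx
        rcases hx with h | h <;> nlinarith
      exact mul_le_mul_of_nonneg_right hx4 (hp_nonneg x)
    have h5 : ∫ x in sᶜ, x ^ 2 * p x ≤ 1 := by
      rw [← hp_iso]
      exact setIntegral_le_integral hp_m2
        (Filter.Eventually.of_forall fun x => mul_nonneg (sq_nonneg x) (hp_nonneg x))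
    rw [integral_const_mul] at h4
    linarith
  have hM0 : 0 < p 0 := lt_of_lt_of_le (by norm_num) hM
  have hhalf : ∫ x in Ici 0, p x = 1/2 := by
    have e1 : ∫ x in Ioi (0:ℝ), p x = ∫ x in Iic (0:ℝ), p x := by
      have h := integral_comp_neg_Ioi (0:ℝ) p
      simp only [hp_symm, neg_zero] at h
      exact h
    have e2 := intervalIntegral.integral_Iic_add_Ioi (b := (0:ℝ)) hp_int.integrableOn hp_int.integrableOn
    rw [hp_mass] at e2
    rw [integral_Ici_eq_integral_Ioi]
    linarith
  have htail_half : ∫ x in Ici t, p x ≤ 1/2 := by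
    rw [← hhalf]
    exact setIntegral_mono_set hp_int.integrableOn
      (Filter.Eventually.of_forall fun x => hp_nonneg x)
      (HasSubset.Subset.eventuallyLE (Ici_subset_Ici.mpr ht))
  by_cases hcbig : (1:ℝ)/16 ≤ p t
  · linarith
  push_neg at hcbig
  have ht0 : 0 < t := by
    rcases ht.lt_or_eq with h | h
    · exact h
    · exfalso; rw [← h] at hcbig; linarith
  rcases eq_or_lt_of_le (hp_nonneg t) with hc0 | hc0
  · -- p t = 0 : the density vanishes beyond t
    have hzero : ∀ x ∈ Ici t, p x ≤ 0 := by
      intro x hx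
      rcases eq_or_lt_of_le (mem_Ici.mp hx) with h | hlt
      · rw [← h, ← hc0]
      have hx0 : 0 < x := lt_trans ht0 hlt
      have key := hp_logconcave 0 x (1 - t/x) (t/x)
        (by rw [sub_nonneg]; exact div_le_one_of_le₀ (le_of_lt hlt) hx0.le)
        (div_nonneg ht hx0.le) (by ring)
      rw [show (1 - t/x) * 0 + (t/x) * x = t by field_simp; ring] at key
      rw [← hc0] at key
      have h1 : 0 < p 0 ^ ((1:ℝ) - t/x) := Real.rpow_pos_of_pos hM0 _
      have h2 : 0 ≤ p x ^ (t/x) := Real.rpow_nonneg (hp_nonneg x) _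
      have h3 : p x ^ (t/x) = 0 := by nlinarith
      rw [Real.rpow_eq_zero (hp_nonneg x) (ne_of_gt (div_pos ht0 hx0))] at h3
      rw [h3]
    calc ∫ x in Ici t, p x ≤ ∫ _x in Ici t, (0:ℝ) :=
          setIntegral_mono_on hp_int.integrableOn (integrable_zero _ _ _).integrableOn
            measurableSet_Ici hzero
    _ = 0 := by simp
    _ ≤ 8 * p t := by rw [← hc0]; norm_num
  -- main case: 0 < p t < 1/16
  set M := p 0 with hMdef
  set c := p t with hcdef
  set L := Real.log (M / c) with hLdef
  have hMc : c < M := by linarith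
  have hL : 0 < L := Real.log_pos ((one_lt_div hc0).mpr hMc)
  set b := L / t with hbdef
  have hb : 0 < b := div_pos hL ht0
  have hbt : b * t = L := by rw [hbdef]; exact div_mul_cancel₀ L ht0.ne'
  have hexp_t : Real.exp (-(b * t)) = c / M := by
    rw [hbt, hLdef, Real.exp_neg, Real.exp_log (div_pos hM0 hc0), inv_div]
  have hLMc : L = Real.log M - Real.log c := Real.log_div hM0.ne' hc0.ne'
  -- pointwise upper bound beyond t
  have hupper : ∀ x ∈ Ioi t, p x ≤ M * Real.exp (-(b * x)) := by
    intro x hx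
    have hxt : t < x := hx
    have hx0 : 0 < x := lt_trans ht0 hxt
    have key := hp_logconcave 0 x (1 - t/x) (t/x)
      (by rw [sub_nonneg]; exact div_le_one_of_le₀ hxt.le hx0.le)
      (div_nonneg ht hx0.le) (by ring)
    rw [show (1 - t/x) * 0 + (t/x) * x = t by field_simp; ring] at key
    have hMa : 0 < M ^ ((1:ℝ) - t/x) := Real.rpow_pos_of_pos hM0 _
    have h1 : p x ^ (t/x) ≤ c / M ^ ((1:ℝ) - t/x) := by
      rw [le_div_iff₀ hMa, mul_comm]; exact key
    have h2 : p x = (p x ^ (t/x)) ^ (x/t) := by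
      rw [← Real.rpow_mul (hp_nonneg x), show t/x * (x/t) = 1 by field_simp, Real.rpow_one]
    rw [h2]
    calc (p x ^ (t/x)) ^ (x/t) ≤ (c / M ^ ((1:ℝ) - t/x)) ^ (x/t) :=
          Real.rpow_le_rpow (Real.rpow_nonneg (hp_nonneg x) _) h1
            (div_nonneg hx0.le ht0.le)
    _ = M * Real.exp (-(b * x)) := by
        rw [Real.rpow_def_of_pos (div_pos hc0 hMa),
          Real.log_div hc0.ne' hMa.ne', Real.log_rpow hM0]
        nth_rewrite 2 [← Real.exp_log hM0]
        rw [← Real.exp_add]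
        congr 1
        rw [hbdef, hLMc]
        field_simp
        ring
  -- pointwise lower bound on (0, t]
  have hlower : ∀ x ∈ Ioc (0:ℝ) t, M * Real.exp (-(b * x)) ≤ p x := by
    intro x hx
    have key := hp_logconcave 0 t (1 - x/t) (x/t)
      (by rw [sub_nonneg]; exact div_le_one_of_le₀ hx.2 ht0.le)
      (div_nonneg hx.1.le ht0.le) (by ring)
    rw [show (1 - x/t) * 0 + (x/t) * t = x by field_simp; ring] at key
    refine le_trans (le_of_eq ?_) key
    rw [Real.rpow_def_of_pos hM0, Real.rpow_def_of_pos hc0]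
    nth_rewrite 1 [← Real.exp_log hM0]
    rw [← Real.exp_add, ← Real.exp_add]
    congr 1
    rw [hbdef, hLMc]
    field_simp
    ring
  -- integral upper bound on tail
  have hup_int : ∫ x in Ici t, p x ≤ M * (Real.exp (-(b * t)) / b) := by
    rw [integral_Ici_eq_integral_Ioi]
    calc ∫ x in Ioi t, p x ≤ ∫ x in Ioi t, M * Real.exp (-(b * x)) :=
          setIntegral_mono_on hp_int.integrableOn ((aux_exp_int hb t).const_mul M)
            measurableSet_Ioi hupper
    _ = M * (Real.exp (-(b * t)) / b) := by rw [integral_const_mul, aux_exp_Ioi t hb]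
  -- integral lower bound on [0, t]
  have hIoc_exp : ∫ x in Ioc 0 t, Real.exp (-(b * x)) = 1/b - Real.exp (-(b * t)) / b := by
    have hsplit := setIntegral_union (f := fun x => Real.exp (-(b * x)))
      (Ioc_disjoint_Ioi (le_refl t)) measurableSet_Ioi
      ((aux_exp_int hb 0).mono_set Ioc_subset_Ioi_self) (aux_exp_int hb t)
    rw [Ioc_union_Ioi_eq_Ioi ht0.le, aux_exp_Ioi 0 hb, aux_exp_Ioi t hb] at hsplit
    simp only [mul_zero, neg_zero, Real.exp_zero] at hsplit
    linarith
  have hlow_int : M * (1/b - Real.exp (-(b * t)) / b) ≤ 1/2 := by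
    calc M * (1/b - Real.exp (-(b * t)) / b)
        = ∫ x in Ioc 0 t, M * Real.exp (-(b * x)) := by rw [integral_const_mul, hIoc_exp]
    _ ≤ ∫ x in Ioc 0 t, p x :=
          setIntegral_mono_on (((aux_exp_int hb 0).mono_set Ioc_subset_Ioi_self).const_mul M)
            (hp_int.integrableOn) measurableSet_Ioc hlower
    _ ≤ ∫ x in Ici 0, p x :=
          setIntegral_mono_set hp_int.integrableOn
            (Filter.Eventually.of_forall fun x => hp_nonneg x)
            (HasSubset.Subset.eventuallyLE (fun x hx => hx.1.le))
    _ = 1/2 := hhalf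
  -- combine
  rw [hexp_t] at hup_int hlow_int
  have hA : M * (c / M / b) = c / b := by field_simp
  have hB : M * (1/b - c / M / b) = (M - c) / b := by field_simp
  rw [hA] at hup_int
  rw [hB] at hlow_int
  have h1 : M - c ≤ 1/2 * b := (div_le_iff₀ hb).mp hlow_int
  have hb4 : 1/4 ≤ b := by linarith
  have h2 : c / b ≤ 8 * c := by
    rw [div_le_iff₀ hb]
    nlinarith
  linarith
end

section
/- Let t, r ≥ 0 and 0 < s ≤ 1. Among all monotonically decreasing logconcave functions p: [t,∞) → [0,1) with ∫_t^∞ p(x)dx = s and p(t) = r, the second moment ∫_t^∞ x² p(x) dx is minimized by the uniform function u(x) = r·1_{[t, t+s/r]}, and hence ∫_t^∞ x² p(x) dx ≥ s t² (1 + s/(rt)). -/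
open MeasureTheory Set Real

/-- **Minimum second moment over truncated decreasing logconcave profiles.**
Let `t, r ≥ 0` with `r t > 0` and `0 < s ≤ 1`.  Among all nonincreasing logconcave
functions `p : [t,∞) → [0,1)` with total mass `s` and `p(t) = r`, the second moment
`∫_t^∞ x² p(x) dx` is minimized by the uniform profile `u = r·1_{[t, t+s/r]}`, and hence
`∫_t^∞ x² p(x) dx ≥ s t² (1 + s/(r t))`. -/
theorem second_moment_min_uniform
    (t r s : ℝ) (ht : 0 ≤ t) (hr : 0 ≤ r) (hs0 : 0 < s) (hs1 : s ≤ 1)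
    (hrt : 0 < r * t)
    (p : ℝ → ℝ)
    (hp_range : ∀ x ∈ Ici t, 0 ≤ p x ∧ p x < 1)
    (hp_anti : AntitoneOn p (Ici t))
    (hp_logconcave : ∀ x y a b : ℝ, t ≤ x → t ≤ y → 0 ≤ a → 0 ≤ b → a + b = 1 →
      p x ^ a * p y ^ b ≤ p (a * x + b * y))
    (hp_int : IntegrableOn p (Ici t))
    (hp_m2 : IntegrableOn (fun x => x ^ 2 * p x) (Ici t))
    (hp_mass : ∫ x in Ici t, p x = s)
    (hp_t : p t = r) :
    (∫ x in Ici t, x ^ 2 * indicator (Icc t (t + s / r)) (fun _ => r) x)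
        ≤ ∫ x in Ici t, x ^ 2 * p x ∧
      s * t ^ 2 * (1 + s / (r * t)) ≤ ∫ x in Ici t, x ^ 2 * p x := by
  have hr0 : 0 < r := hr.lt_of_ne (fun h => by rw [← h] at hrt; simp at hrt)
  have ht0 : 0 < t := ht.lt_of_ne (fun h => by rw [← h] at hrt; simp at hrt)
  set c : ℝ := t + s / r with hc
  have hsr : 0 < s / r := div_pos hs0 hr0
  have htc : t ≤ c := by simp only [hc]; linarith
  have hc0 : 0 ≤ c := ht.trans htc
  set u : ℝ → ℝ := indicator (Icc t c) (fun _ => r) with hu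
  -- rewrite x^2 * u x as an indicator
  have hu2eq : (fun x => x ^ 2 * u x) = indicator (Icc t c) (fun x => x ^ 2 * r) := by
    funext x
    by_cases hx : x ∈ Icc t c <;> simp [hu, indicator, hx]
  -- integrability of u and x^2 * u
  have hu_int : IntegrableOn u (Ici t) := by
    have : Integrable u := by
      rw [hu, integrable_indicator_iff measurableSet_Icc]
      exact integrableOn_const (by simp)
    exact this.integrableOn
  have hu2_int : IntegrableOn (fun x => x ^ 2 * u x) (Ici t) := by
    have : Integrable (fun x => x ^ 2 * u x) := by
      rw [hu2eq, integrable_indicator_iff measurableSet_Icc]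
      exact (continuous_id.pow 2 |>.mul continuous_const).continuousOn.integrableOn_Icc
    exact this.integrableOn
  have hIcc : Ici t ∩ Icc t c = Icc t c := Set.inter_eq_right.mpr Set.Icc_subset_Ici_self
  -- mass of u
  have hu_mass : ∫ x in Ici t, u x = s := by
    rw [hu, setIntegral_indicator measurableSet_Icc, hIcc, setIntegral_const,
      Real.volume_real_Icc_of_le htc, smul_eq_mul]
    rw [hc, add_sub_cancel_left, div_mul_cancel₀ _ hr0.ne']
  -- second moment of u
  have hu_m2 : ∫ x in Ici t, x ^ 2 * u x = r * (c ^ 3 - t ^ 3) / 3 := by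
    rw [hu2eq, setIntegral_indicator measurableSet_Icc, hIcc,
      integral_Icc_eq_integral_Ioc, ← intervalIntegral.integral_of_le htc,
      intervalIntegral.integral_mul_const, integral_pow]
    ring
  -- pointwise inequality
  have hpt : ∀ x ∈ Ici t, 0 ≤ (x ^ 2 - c ^ 2) * (p x - u x) := by
    intro x hx
    have hx' : t ≤ x := hx
    by_cases hxc : x ≤ c
    · have hux : u x = r := by
        rw [hu]; exact indicator_of_mem (show x ∈ Icc t c from ⟨hx', hxc⟩) _
      have hpr : p x ≤ r := hp_t ▸ hp_anti (self_mem_Ici) hx hx'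
      have hx2 : x ^ 2 ≤ c ^ 2 := pow_le_pow_left₀ (ht.trans hx') hxc 2
      nlinarith
    · have hux : u x = 0 := by
        rw [hu]; exact indicator_of_notMem (fun h => hxc h.2) _
      have hp0 : 0 ≤ p x := (hp_range x hx).1
      have hx2 : c ^ 2 ≤ x ^ 2 := pow_le_pow_left₀ hc0 (le_of_not_ge hxc) 2
      nlinarith
  have hkey : 0 ≤ ∫ x in Ici t, (x ^ 2 - c ^ 2) * (p x - u x) :=
    setIntegral_nonneg measurableSet_Ici hpt
  -- split the integral
  have hsplit : ∫ x in Ici t, (x ^ 2 - c ^ 2) * (p x - u x)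
      = (∫ x in Ici t, x ^ 2 * p x) - (∫ x in Ici t, x ^ 2 * u x)
        - c ^ 2 * ((∫ x in Ici t, p x) - (∫ x in Ici t, u x)) := by
    have h1 : (fun x => (x ^ 2 - c ^ 2) * (p x - u x))
        = fun x => (x ^ 2 * p x - x ^ 2 * u x) - (c ^ 2 * p x - c ^ 2 * u x) := by
      funext x; ring
    have i1 : IntegrableOn (fun x => x ^ 2 * p x - x ^ 2 * u x) (Ici t) := hp_m2.sub hu2_int
    have i3 : IntegrableOn (fun x => c ^ 2 * p x) (Ici t) := hp_int.const_mul _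
    have i4 : IntegrableOn (fun x => c ^ 2 * u x) (Ici t) := hu_int.const_mul _
    have i2 : IntegrableOn (fun x => c ^ 2 * p x - c ^ 2 * u x) (Ici t) := i3.sub i4
    rw [h1, integral_sub i1 i2, integral_sub hp_m2 hu2_int, integral_sub i3 i4,
      integral_const_mul, integral_const_mul]
    ring
  rw [hsplit, hp_mass, hu_mass, sub_self, mul_zero, sub_zero, sub_nonneg] at hkey
  refine ⟨hkey, le_trans ?_ hkey⟩
  rw [hu_m2, hc]
  have expand : r * ((t + s / r) ^ 3 - t ^ 3) / 3
      = s * t ^ 2 + s ^ 2 * t / r + s ^ 3 / (3 * r ^ 2) := by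
    field_simp
    ring
  have key : s * t ^ 2 * (1 + s / (r * t)) = s * t ^ 2 + s ^ 2 * t / r := by
    field_simp
  rw [expand, key]
  have h0 : 0 ≤ s ^ 3 / (3 * r ^ 2) := by positivity
  linarith
end

section
/- Let t ≥ 0 and 0 < s ≤ 1. Among all monotonically decreasing logconcave functions p: [0,t] → [0,1) with ∫_0^t p(x)dx = s, the second moment ∫_0^t x² p(x) dx is maximized by the constant function u(x) = s/t, and hence ∫_0^t x² p(x) dx ≤ s t²/3. -/
open MeasureTheory Set Real

/-- **Maximum second moment over decreasing logconcave profiles on `[0,t]`.**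
Let `t ≥ 0` and `0 < s ≤ 1`.  Among all nonincreasing logconcave functions
`p : [0,t] → [0,1)` with total mass `s`, the second moment `∫_0^t x² p(x) dx` is
maximized by the constant profile `u ≡ s/t`, and hence `∫_0^t x² p(x) dx ≤ s t²/3`. -/
theorem second_moment_max_uniform
    (t s : ℝ) (ht : 0 ≤ t) (hs0 : 0 < s) (hs1 : s ≤ 1)
    (p : ℝ → ℝ)
    (hp_range : ∀ x ∈ Icc 0 t, 0 ≤ p x ∧ p x < 1)
    (hp_anti : AntitoneOn p (Icc 0 t))
    (hp_logconcave : ∀ x y a b : ℝ, x ∈ Icc 0 t → y ∈ Icc 0 t →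
      0 ≤ a → 0 ≤ b → a + b = 1 → p x ^ a * p y ^ b ≤ p (a * x + b * y))
    (hp_int : IntegrableOn p (Icc 0 t))
    (hp_mass : ∫ x in Icc 0 t, p x = s) :
    (∫ x in Icc 0 t, x ^ 2 * p x) ≤ ∫ x in Icc 0 t, x ^ 2 * (s / t) ∧
      (∫ x in Icc 0 t, x ^ 2 * p x) ≤ s * t ^ 2 / 3 := by
  -- `t` must be positive
  have ht0 : 0 < t := by
    rcases ht.lt_or_eq with h | h
    · exact h
    · exfalso
      rw [← h, Set.Icc_self] at hp_mass
      have : (volume : Measure ℝ) {(0 : ℝ)} = 0 := measure_singleton 0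
      rw [Measure.restrict_eq_zero.2 this] at hp_mass
      simp at hp_mass
      exact absurd hp_mass.symm hs0.ne'
  set u : ℝ := s / t with hu
  have hut : u * t = s := div_mul_cancel₀ s ht0.ne'
  -- crossing point
  set S : Set ℝ := {x ∈ Icc 0 t | p x ≤ u} with hS
  set x₀ : ℝ := sInf (S ∪ {t}) with hx₀
  have hbdd : BddBelow (S ∪ {t}) := by
    refine ⟨0, fun y hy => ?_⟩
    rcases hy with hy | hy
    · exact hy.1.1
    · simp only [Set.mem_singleton_iff] at hy; simpa [hy] using ht
  have hne : (S ∪ {t}).Nonempty := ⟨t, Or.inr rfl⟩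
  have hx₀0 : 0 ≤ x₀ := le_csInf hne (fun y hy => by
    rcases hy with hy | hy
    · exact hy.1.1
    · simp only [Set.mem_singleton_iff] at hy; simpa [hy] using ht)
  have hx₀t : x₀ ≤ t := csInf_le hbdd (Or.inr rfl)
  -- sign claims
  have h1 : ∀ x ∈ Icc 0 t, x < x₀ → u ≤ p x := by
    intro x hx hlt
    by_contra hc
    push_neg at hc
    have : x ∈ S ∪ {t} := Or.inl ⟨hx, hc.le⟩
    exact absurd (csInf_le hbdd this) (not_le.2 hlt)
  have h2 : ∀ x ∈ Icc 0 t, x₀ < x → p x ≤ u := by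
    intro x hx hlt
    obtain ⟨y, hy, hyx⟩ := (csInf_lt_iff hbdd hne).1 hlt
    rcases hy with hy | hy
    · exact le_trans (hp_anti hy.1 hx hyx.le) hy.2
    · simp only [Set.mem_singleton_iff] at hy
      exact absurd hx.2 (not_le.2 (hy ▸ hyx))
  have hsign : ∀ x ∈ Icc 0 t, (x ^ 2 - x₀ ^ 2) * (p x - u) ≤ 0 := by
    intro x hx
    rcases lt_trichotomy x x₀ with h | h | h
    · apply mul_nonpos_of_nonpos_of_nonneg
      · have := pow_le_pow_left₀ hx.1 h.le 2
        linarith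
      · linarith [h1 x hx h]
    · simp [h]
    · apply mul_nonpos_of_nonneg_of_nonpos
      · have := pow_le_pow_left₀ hx₀0 h.le 2
        linarith
      · linarith [h2 x hx h]
  -- integrabilities
  have hmeas : AEStronglyMeasurable p (volume.restrict (Icc 0 t)) :=
    hp_int.aestronglyMeasurable
  have hpu_int : IntegrableOn (fun x => p x - u) (Icc 0 t) :=
    hp_int.sub (integrableOn_const (by simp [Real.volume_Icc]))
  have hbound : ∀ (c : ℝ) (g : ℝ → ℝ), (∀ x ∈ Icc 0 t, ‖g x‖ ≤ c) →
      AEStronglyMeasurable g (volume.restrict (Icc 0 t)) →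
      IntegrableOn (fun x => g x) (Icc 0 t) → True := fun _ _ _ _ _ => trivial
  have hsqb : ∀ᵐ x ∂(volume.restrict (Icc 0 t)), ‖x ^ 2‖ ≤ t ^ 2 := by
    refine (ae_restrict_iff' measurableSet_Icc).2 (ae_of_all _ fun x hx => ?_)
    rw [Real.norm_eq_abs, abs_of_nonneg (sq_nonneg x)]
    exact pow_le_pow_left₀ hx.1 hx.2 2
  have hA : IntegrableOn (fun x => x ^ 2 * p x) (Icc 0 t) :=
    hp_int.bdd_mul (continuous_pow 2 |>.aestronglyMeasurable.restrict) hsqb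
  have hA' : IntegrableOn (fun x => x ^ 2 * (p x - u)) (Icc 0 t) :=
    hpu_int.bdd_mul (continuous_pow 2 |>.aestronglyMeasurable.restrict) hsqb
  have hconst : IntegrableOn (fun x => x₀ ^ 2 * (p x - u)) (Icc 0 t) :=
    hpu_int.const_mul _
  -- mass of p - u is 0
  have hvol : (volume (Icc (0:ℝ) t)).toReal = t := by
    rw [Real.volume_Icc]; simp [ht]
  have hint_u : ∫ x in Icc 0 t, (u : ℝ) = s := by
    rw [setIntegral_const, smul_eq_mul, measureReal_def, hvol, mul_comm, hut]
  have hmass0 : ∫ x in Icc 0 t, (p x - u) = 0 := by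
    rw [integral_sub hp_int (integrableOn_const (by simp [Real.volume_Icc]))]
    rw [hp_mass, hint_u]; ring
  -- key inequality
  have hkey : ∫ x in Icc 0 t, (x ^ 2 - x₀ ^ 2) * (p x - u) ≤ 0 :=
    setIntegral_nonpos measurableSet_Icc hsign
  have hsplit : ∫ x in Icc 0 t, (x ^ 2 - x₀ ^ 2) * (p x - u)
      = (∫ x in Icc 0 t, x ^ 2 * (p x - u)) - ∫ x in Icc 0 t, x₀ ^ 2 * (p x - u) := by
    rw [← integral_sub hA' hconst]
    congr 1; ext x; ring
  have hz : ∫ x in Icc 0 t, x₀ ^ 2 * (p x - u) = 0 := by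
    rw [integral_const_mul, hmass0, mul_zero]
  have hmain : ∫ x in Icc 0 t, x ^ 2 * (p x - u) ≤ 0 := by
    rw [hsplit, hz, sub_zero] at hkey; exact hkey
  have hB : IntegrableOn (fun x => x ^ 2 * u) (Icc 0 t) :=
    (((continuous_pow 2).mul continuous_const).integrableOn_Icc)
  have hsplit2 : ∫ x in Icc 0 t, x ^ 2 * (p x - u)
      = (∫ x in Icc 0 t, x ^ 2 * p x) - ∫ x in Icc 0 t, x ^ 2 * u := by
    rw [← integral_sub hA hB]
    congr 1; ext x; ring
  have hfirst : (∫ x in Icc 0 t, x ^ 2 * p x) ≤ ∫ x in Icc 0 t, x ^ 2 * (s / t) := by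
    rw [hsplit2] at hmain; linarith
  refine ⟨hfirst, hfirst.trans_eq ?_⟩
  have hx2 : ∫ x in Icc 0 t, x ^ 2 = t ^ 3 / 3 := by
    rw [MeasureTheory.integral_Icc_eq_integral_Ioc,
      ← intervalIntegral.integral_of_le ht, integral_pow]
    norm_num
  calc ∫ x in Icc 0 t, x ^ 2 * (s / t) = (s / t) * ∫ x in Icc 0 t, x ^ 2 := by
        rw [← integral_const_mul]; congr 1; ext x; ring
    _ = s * t ^ 2 / 3 := by rw [hx2]; field_simp
end

section
/- Let q₁ be a symmetric one-dimensional isotropic ψ-isoperimetric density, and let q̂ be q₁ restricted to ℝ∖[a,b] where 0 ≤ a < b, b−a ≥ cε, and each of the sets (−∞,a], [a,b], [b,∞) has q₁-measure at least ε. Then E_{q̂}[X] < −ψc²ε³/2 and Var_{q̂}(X) ≤ 1/(2ε). -/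
open MeasureTheory Set Real

set_option maxHeartbeats 1000000 in
/-- **Mean gap for restricted isoperimetric densities.**  Let `q₁` be a symmetric
isotropic `ψ`-isoperimetric probability density on `ℝ` and `q̂` the renormalized
restriction of `q₁` to `ℝ ∖ [a,b]`, where `0 ≤ a < b`, `b − a ≥ c ε`, and each of
`(−∞,a]`, `[a,b]`, `[b,∞)` has `q₁`-mass at least `ε`.  Then
`E_{q̂}[X] < −ψ c² ε³ / 2` and `Var_{q̂}(X) ≤ 1/(2ε)`. -/
theorem restricted_isoperimetric_mean_gap
    (q₁ : ℝ → ℝ) (ψ c ε a b : ℝ)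
    (hψ : 0 < ψ) (hc : 0 < c) (hε : 0 < ε)
    (hq_nonneg : ∀ x, 0 ≤ q₁ x)
    (hq_int : Integrable q₁)
    (hq_mass : ∫ x, q₁ x = 1)
    (hq_symm : ∀ x, q₁ (-x) = q₁ x)
    (hq_m1 : Integrable (fun x => x * q₁ x))
    (hq_m2 : Integrable (fun x => x ^ 2 * q₁ x))
    (hq_iso : ∫ x, x ^ 2 * q₁ x = 1)
    (hq_isoperimetric : ∀ x : ℝ,
      ψ * min (∫ y in Ici x, q₁ y) (∫ y in Iic x, q₁ y) ≤ q₁ x)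
    (hab : 0 ≤ a) (hab' : a < b) (hgap : c * ε ≤ b - a)
    (hmass_left : ε ≤ ∫ x in Iic a, q₁ x)
    (hmass_mid : ε ≤ ∫ x in Icc a b, q₁ x)
    (hmass_right : ε ≤ ∫ x in Ici b, q₁ x)
    (Z μ V : ℝ)
    (hZ : Z = 1 - ∫ x in Icc a b, q₁ x)
    (hμ : μ = (∫ x in (Icc a b)ᶜ, x * q₁ x) / Z)
    (hV : V = (∫ x in (Icc a b)ᶜ, x ^ 2 * q₁ x) / Z - μ ^ 2) :
    μ < -(ψ * c ^ 2 * ε ^ 3) / 2 ∧ V ≤ 1 / (2 * ε) := by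
  have hIccM : MeasurableSet (Icc a b) := measurableSet_Icc
  have hnn : ∀ (s : Set ℝ), 0 ≤ᵐ[volume.restrict s] q₁ :=
    fun s => ae_restrict_of_ae (Filter.Eventually.of_forall hq_nonneg)
  -- pointwise lower bound on [a,b]
  have hq_lb : ∀ x ∈ Icc a b, ψ * ε ≤ q₁ x := by
    intro x hx
    have h1 : (∫ y in Ici b, q₁ y) ≤ ∫ y in Ici x, q₁ y :=
      setIntegral_mono_set hq_int.integrableOn (hnn _)
        (HasSubset.Subset.eventuallyLE (Ici_subset_Ici.mpr hx.2))
    have h2 : (∫ y in Iic a, q₁ y) ≤ ∫ y in Iic x, q₁ y :=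
      setIntegral_mono_set hq_int.integrableOn (hnn _)
        (HasSubset.Subset.eventuallyLE (Iic_subset_Iic.mpr hx.1))
    have hmin : ε ≤ min (∫ y in Ici x, q₁ y) (∫ y in Iic x, q₁ y) :=
      le_min (by linarith) (by linarith)
    calc ψ * ε ≤ ψ * min (∫ y in Ici x, q₁ y) (∫ y in Iic x, q₁ y) := by
          exact mul_le_mul_of_nonneg_left hmin hψ.le
      _ ≤ q₁ x := hq_isoperimetric x
  -- Z as an integral
  have hsplit : ∀ (f : ℝ → ℝ), Integrable f →
      (∫ x in Icc a b, f x) + ∫ x in (Icc a b)ᶜ, f x = ∫ x, f x :=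
    fun f hf => integral_add_compl hIccM hf
  have hZ' : (∫ x in (Icc a b)ᶜ, q₁ x) = Z := by
    have := hsplit q₁ hq_int; rw [hq_mass] at this; rw [hZ]; linarith
  -- Z ≥ 2ε
  have hdisj : Disjoint (Iio a) (Ioi b) := by
    rw [Set.disjoint_left]; intro x hx hx'
    simp only [mem_Iio] at hx; simp only [mem_Ioi] at hx'; linarith
  have hunion : (∫ x in (Icc a b)ᶜ, q₁ x)
      = (∫ x in Iio a, q₁ x) + ∫ x in Ioi b, q₁ x := by
    have hc' : (Icc a b)ᶜ = Iio a ∪ Ioi b := by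
      ext x
      simp only [mem_compl_iff, mem_Icc, mem_union, mem_Iio, mem_Ioi, not_and_or, not_le]
    rw [hc']
    exact setIntegral_union hdisj measurableSet_Ioi hq_int.integrableOn hq_int.integrableOn
  have hIio : (∫ x in Iio a, q₁ x) = ∫ x in Iic a, q₁ x :=
    setIntegral_congr_set Iio_ae_eq_Iic
  have hIoi : (∫ x in Ioi b, q₁ x) = ∫ x in Ici b, q₁ x :=
    setIntegral_congr_set Ioi_ae_eq_Ici
  have hZ2 : 2 * ε ≤ Z := by rw [← hZ', hunion, hIio, hIoi]; linarith
  have hZpos : 0 < Z := by linarith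
  have hZlt1 : Z < 1 := by rw [hZ]; linarith
  -- mean zero
  have hmean : ∫ x, x * q₁ x = 0 := by
    have h := MeasureTheory.integral_neg_eq_self (fun x => x * q₁ x) volume
    simp only [hq_symm, neg_mul] at h
    rw [integral_neg] at h
    linarith
  set I := ∫ x in Icc a b, x * q₁ x with hI
  have hIcompl : (∫ x in (Icc a b)ᶜ, x * q₁ x) = -I := by
    have := hsplit (fun x => x * q₁ x) hq_m1; rw [hmean] at this; linarith
  -- lower bound on I
  have hid : (∫ x in Icc a b, x) = (b ^ 2 - a ^ 2) / 2 := by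
    rw [setIntegral_congr_set (Ioc_ae_eq_Icc (μ := volume) (a := a) (b := b)).symm,
      ← intervalIntegral.integral_of_le hab'.le]
    simpa using intervalIntegral.integral_id (a := a) (b := b)
  have hIlb : ψ * c ^ 2 * ε ^ 3 / 2 ≤ I := by
    have hmono : (∫ x in Icc a b, ψ * ε * x) ≤ I := by
      apply setIntegral_mono_on
      · exact (continuous_const.mul continuous_id).integrableOn_Icc
      · exact hq_m1.integrableOn
      · exact hIccM
      · intro x hx
        have hx0 : 0 ≤ x := le_trans hab hx.1
        calc ψ * ε * x ≤ q₁ x * x :=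
              mul_le_mul_of_nonneg_right (hq_lb x hx) hx0
          _ = x * q₁ x := mul_comm _ _
    have hval : (∫ x in Icc a b, ψ * ε * x) = ψ * ε * ((b ^ 2 - a ^ 2) / 2) := by
      rw [integral_const_mul, hid]
    rw [hval] at hmono
    have h1 : c * ε ≤ b + a := by linarith
    have h2 : (c * ε) * (c * ε) ≤ (b - a) * (b + a) :=
      mul_le_mul hgap h1 (by positivity) (by linarith)
    have h3 : c ^ 2 * ε ^ 2 ≤ b ^ 2 - a ^ 2 := by nlinarith
    nlinarith [mul_le_mul_of_nonneg_left h3 (mul_nonneg hψ.le hε.le)]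
  have hIpos : 0 < I := lt_of_lt_of_le (by positivity) hIlb
  constructor
  · rw [hμ, hIcompl]
    rw [div_lt_iff₀ hZpos]
    have hK : 0 < ψ * c ^ 2 * ε ^ 3 / 2 := by positivity
    have hKZ : ψ * c ^ 2 * ε ^ 3 / 2 * Z < I := by
      calc ψ * c ^ 2 * ε ^ 3 / 2 * Z < ψ * c ^ 2 * ε ^ 3 / 2 * 1 :=
            mul_lt_mul_of_pos_left hZlt1 hK
        _ = ψ * c ^ 2 * ε ^ 3 / 2 := mul_one _
        _ ≤ I := hIlb
    linarith
  · -- variance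
    have hS1 : (∫ x in (Icc a b)ᶜ, x ^ 2 * q₁ x) ≤ 1 := by
      rw [← hq_iso]
      exact setIntegral_le_integral hq_m2
        (Filter.Eventually.of_forall fun x => mul_nonneg (sq_nonneg x) (hq_nonneg x))
    have hdiv : (∫ x in (Icc a b)ᶜ, x ^ 2 * q₁ x) / Z ≤ 1 / (2 * ε) :=
      div_le_div₀ zero_le_one hS1 (by positivity) hZ2
    rw [hV]
    linarith [sq_nonneg μ]
end

section
/- Let q₁ be a symmetric one-dimensional isotropic ψ-isoperimetric density and let q̂ be q₁ restricted to ℝ∖[a,b] where a ≤ 0 < b and b > cε for some constant c > 0, with each of (−∞,a], [a,b], [b,∞) carrying q₁-mass at least ε. Then E_{q̂}[X²] > 1 + Cε³ for C = min(ψc/2, 1/8). -/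
set_option maxHeartbeats 4000000


open MeasureTheory Set Real

/-- **Second-moment gap for restricted isoperimetric densities.**  Let `q₁` be a
symmetric isotropic `ψ`-isoperimetric probability density on `ℝ` and `q̂` the
renormalized restriction of `q₁` to `ℝ ∖ [a,b]`, where `a ≤ 0 < b`, `b > c ε` with
`c > 0`, and each of `(−∞,a]`, `[a,b]`, `[b,∞)` has `q₁`-mass at least `ε`.  Then
`E_{q̂}[X²] > 1 + C ε³` for `C = min (ψ c / 2) (1/8)`. -/
theorem restricted_isoperimetric_second_moment_gap
    (q₁ : ℝ → ℝ) (ψ c ε a b : ℝ)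
    (hψ : 0 < ψ) (hc : 0 < c) (hε : 0 < ε)
    (hq_nonneg : ∀ x, 0 ≤ q₁ x)
    (hq_int : Integrable q₁)
    (hq_mass : ∫ x, q₁ x = 1)
    (hq_symm : ∀ x, q₁ (-x) = q₁ x)
    (hq_m2 : Integrable (fun x => x ^ 2 * q₁ x))
    (hq_iso : ∫ x, x ^ 2 * q₁ x = 1)
    (hq_isoperimetric : ∀ x : ℝ,
      ψ * min (∫ y in Ici x, q₁ y) (∫ y in Iic x, q₁ y) ≤ q₁ x)
    (ha : a ≤ 0) (hb : 0 < b) (hbc : c * ε < b)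
    (hmass_left : ε ≤ ∫ x in Iic a, q₁ x)
    (hmass_mid : ε ≤ ∫ x in Icc a b, q₁ x)
    (hmass_right : ε ≤ ∫ x in Ici b, q₁ x) :
    1 + min (ψ * c / 2) (1 / 8) * ε ^ 3 <
      (∫ x in (Icc a b)ᶜ, x ^ 2 * q₁ x) / (1 - ∫ x in Icc a b, q₁ x) := by
  set f : ℝ → ℝ := fun x => q₁ x - x ^ 2 * q₁ x with hfdef
  have hf_int : Integrable f := hq_int.sub hq_m2
  have hf_tot : ∫ x, f x = 0 := by
    simp only [hfdef]
    rw [integral_sub hq_int hq_m2, hq_mass, hq_iso]; ring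
  -- half masses
  have refl_q : ∫ x in Iic (0:ℝ), q₁ x = ∫ x in Ioi (0:ℝ), q₁ x := by
    have := integral_comp_neg_Iic (0:ℝ) q₁
    rw [neg_zero] at this
    rw [← this]
    exact setIntegral_congr_fun measurableSet_Iic fun x _ => (hq_symm x).symm
  have hq_sum0 := intervalIntegral.integral_Iic_add_Ioi (b := (0:ℝ)) hq_int.integrableOn hq_int.integrableOn
  rw [hq_mass] at hq_sum0
  have hq_half : ∫ x in Iic (0:ℝ), q₁ x = 1/2 := by linarith
  have hq_halfIoi : ∫ x in Ioi (0:ℝ), q₁ x = 1/2 := by linarith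
  have hε_half : ε ≤ 1/2 := by
    have h1 : ∫ x in Iic a, q₁ x ≤ ∫ x in Iic (0:ℝ), q₁ x :=
      setIntegral_mono_set hq_int.integrableOn
        (Filter.Eventually.of_forall fun x => hq_nonneg x)
        ((Iic_subset_Iic.mpr ha).eventuallyLE)
    linarith
  have hmass_Ioib : ε ≤ ∫ x in Ioi b, q₁ x := by
    rw [← integral_Ici_eq_integral_Ioi]; exact hmass_right
  -- density lower bound on [0,b]
  have hdens : ∀ x : ℝ, 0 ≤ x → x ≤ b → ψ * ε ≤ q₁ x := by
    intro x hx0 hxb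
    have h1 : ε ≤ ∫ y in Ici x, q₁ y :=
      le_trans hmass_right (setIntegral_mono_set hq_int.integrableOn
        (Filter.Eventually.of_forall fun y => hq_nonneg y)
        ((Ici_subset_Ici.mpr hxb).eventuallyLE))
    have h2 : ε ≤ ∫ y in Iic x, q₁ y := by
      have h3 : ∫ y in Iic (0:ℝ), q₁ y ≤ ∫ y in Iic x, q₁ y :=
        setIntegral_mono_set hq_int.integrableOn
          (Filter.Eventually.of_forall fun y => hq_nonneg y)
          ((Iic_subset_Iic.mpr hx0).eventuallyLE)
      linarith
    calc ψ * ε ≤ ψ * min (∫ y in Ici x, q₁ y) (∫ y in Iic x, q₁ y) :=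
          mul_le_mul_of_nonneg_left (le_min h1 h2) hψ.le
      _ ≤ q₁ x := hq_isoperimetric x
  -- H machinery
  have hIoiIic : ∀ t : ℝ, ∫ x in Ioi t, f x = - ∫ x in Iic t, f x := by
    intro t
    have := intervalIntegral.integral_Iic_add_Ioi (b := t) hf_int.integrableOn hf_int.integrableOn
    rw [hf_tot] at this; linarith
  have hreflf : ∀ t : ℝ, ∫ x in Iic t, f x = - ∫ x in Iic (-t), f x := by
    intro t
    have h1 : ∫ x in Iic t, f x = ∫ x in Ioi (-t), f x := by
      rw [← integral_comp_neg_Iic t f]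
      refine setIntegral_congr_fun measurableSet_Iic fun x _ => ?_
      simp only [hfdef]
      rw [hq_symm x]; ring
    rw [h1, hIoiIic]
  have hH0 : ∫ x in Iic (0:ℝ), f x = 0 := by
    have := hreflf 0; rw [neg_zero] at this; linarith
  have hIoc : ∀ s t : ℝ, s ≤ t →
      ∫ x in Ioc s t, f x = (∫ x in Iic t, f x) - ∫ x in Iic s, f x := by
    intro s t hst
    rw [← intervalIntegral.integral_of_le hst,
      ← intervalIntegral.integral_Iic_sub_Iic hf_int.integrableOn hf_int.integrableOn]
  have hkey : ∀ t : ℝ, 0 ≤ t → 0 ≤ ∫ x in Iic t, f x := by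
    intro t ht
    rcases le_or_gt t 1 with h1 | h1
    · have h2 := hIoc 0 t ht
      rw [hH0, sub_zero] at h2
      rw [← h2]
      refine setIntegral_nonneg measurableSet_Ioc fun x hx => ?_
      have hx2 : x ^ 2 ≤ 1 := by nlinarith [hx.1, hx.2]
      have h3 := mul_nonneg (sub_nonneg.mpr hx2) (hq_nonneg x)
      simp only [hfdef]; nlinarith
    · have h2 := hIoiIic t
      have h3 : ∫ x in Ioi t, f x ≤ 0 := by
        refine setIntegral_nonpos measurableSet_Ioi fun x hx => ?_
        have hx1 : t < x := hx
        have hx2 : 1 ≤ x ^ 2 := by nlinarith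
        have h4 := mul_nonneg (sub_nonneg.mpr hx2) (hq_nonneg x)
        simp only [hfdef]; nlinarith
      linarith
  -- T ≥ H(b)
  have hTsplit : ∫ x in Icc a b, f x = (∫ x in Iic b, f x) - ∫ x in Iic a, f x := by
    rw [integral_Icc_eq_integral_Ioc, hIoc a b (le_trans ha hb.le)]
  have hTa : ∫ x in Iic a, f x ≤ 0 := by
    have h1 := hreflf a
    have h2 := hkey (-a) (neg_nonneg.mpr ha)
    linarith
  have hTgeHb : (∫ x in Iic b, f x) ≤ ∫ x in Icc a b, f x := by linarith
  have hHb_Ioc : ∫ x in Iic b, f x = ∫ x in Ioc 0 b, f x := by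
    rw [hIoc 0 b hb.le, hH0, sub_zero]
  -- ψεb ≤ 1/2
  have hψεb : ψ * ε * b ≤ 1 / 2 := by
    have h1 : (∫ _x in Ioc (0:ℝ) b, (ψ * ε)) ≤ ∫ x in Ioc (0:ℝ) b, q₁ x :=
      setIntegral_mono_on (integrableOn_const measure_Ioc_lt_top.ne)
        hq_int.integrableOn measurableSet_Ioc (fun x hx => hdens x hx.1.le hx.2)
    have h2 : ∫ x in Ioc (0:ℝ) b, q₁ x ≤ 1/2 := by
      have h3 : ∫ x in Ioc (0:ℝ) b, q₁ x ≤ ∫ x in Ioi (0:ℝ), q₁ x :=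
        setIntegral_mono_set hq_int.integrableOn
          (Filter.Eventually.of_forall fun y => hq_nonneg y)
          (Ioc_subset_Ioi_self.eventuallyLE)
      linarith
    have h3 : (∫ _x in Ioc (0:ℝ) b, (ψ * ε)) = ψ * ε * b := by
      rw [setIntegral_const]
      rw [Real.volume_real_Ioc_of_le hb.le]
      rw [smul_eq_mul]
      ring
    linarith
  -- polynomial integral
  have hpoly : ∀ r : ℝ, 0 ≤ r →
      (∫ x in Ioc (0:ℝ) r, (ψ * ε * (1 - x ^ 2))) = ψ * ε * (r - r ^ 3 / 3) := by
    intro r hr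
    rw [← intervalIntegral.integral_of_le hr, intervalIntegral.integral_const_mul,
      intervalIntegral.integral_sub intervalIntegrable_const (intervalIntegral.intervalIntegrable_pow 2)]
    rw [integral_pow, intervalIntegral.integral_const]
    norm_num
  have hlow : ∀ r : ℝ, 0 < r → r ≤ b → r ≤ 1 →
      ψ * ε * (r - r ^ 3 / 3) ≤ ∫ x in Ioc (0:ℝ) r, f x := by
    intro r hr hrb hr1
    rw [← hpoly r hr.le]
    refine setIntegral_mono_on
      ((continuous_const.mul (continuous_const.sub (continuous_pow 2))).integrableOn_Ioc)
      hf_int.integrableOn measurableSet_Ioc fun x hx => ?_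
    have hx2 : x ^ 2 ≤ 1 := by nlinarith [hx.1, hx.2]
    have hd := hdens x hx.1.le (le_trans hx.2 hrb)
    have h1 := mul_nonneg (sub_nonneg.mpr hx2) (by linarith : (0:ℝ) ≤ q₁ x - ψ * ε)
    have h2 : (1 - x ^ 2) * (q₁ x - ψ * ε)
        = q₁ x - x ^ 2 * q₁ x - ψ * ε * (1 - x ^ 2) := by ring
    simp only [hfdef]; linarith
  -- main bound : K ≤ H(b)
  have hKb : min (ψ * c / 2) (1 / 8) * ε ^ 3 ≤ ∫ x in Iic b, f x := by
    have hmin : min (ψ * c / 2) (1 / 8) * ε ^ 3 ≤ (ψ * c / 2) * ε ^ 3 :=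
      mul_le_mul_of_nonneg_right (min_le_left _ _) (by positivity)
    have hcb : c * ε ≤ b := hbc.le
    rcases le_or_gt b 1 with hb1 | hb1
    · have h1 := hlow b hb le_rfl hb1
      have hb3 : b ^ 3 ≤ b := by
        nlinarith [mul_nonneg (mul_nonneg hb.le (sub_nonneg.mpr hb1)) (show (0:ℝ) ≤ 1 + b by linarith)]
      have h2 : ψ * c / 2 * ε ^ 3 ≤ ψ * ε * (b - b ^ 3 / 3) := by
        nlinarith [mul_le_mul_of_nonneg_left hcb (show (0:ℝ) ≤ ψ * ε ^ 2 / 2 by positivity),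
          mul_le_mul_of_nonneg_left hε_half (show (0:ℝ) ≤ ψ * b * ε / 2 by positivity),
          mul_le_mul_of_nonneg_left hb3 (show (0:ℝ) ≤ ψ * ε / 3 by positivity)]
      rw [hHb_Ioc]
      linarith
    · rcases le_or_gt (ψ * b * ε / 2) (b ^ 2 - 1) with hu | hu
      · -- tail bound
        have hgb : (b ^ 2 - 1) * ε ≤ ∫ x in Ioi b, (x ^ 2 * q₁ x - q₁ x) := by
          have hp : ∀ x ∈ Ioi b, (b ^ 2 - 1) * q₁ x ≤ x ^ 2 * q₁ x - q₁ x := by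
            intro x hx
            have hxb : b < x := hx
            have hbx2 : b ^ 2 ≤ x ^ 2 := by nlinarith
            nlinarith [hq_nonneg x, mul_le_mul_of_nonneg_right hbx2 (hq_nonneg x)]
          have hgint : IntegrableOn (fun x => x ^ 2 * q₁ x - q₁ x) (Ioi b) :=
            (hq_m2.sub hq_int).integrableOn
          have h2 := setIntegral_mono_on ((hq_int.const_mul (b ^ 2 - 1)).integrableOn)
            hgint measurableSet_Ioi hp
          have h3 : ∫ x in Ioi b, (b ^ 2 - 1) * q₁ x = (b ^ 2 - 1) * ∫ x in Ioi b, q₁ x :=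
            integral_const_mul _ _
          have h4 : (b ^ 2 - 1) * ε ≤ (b ^ 2 - 1) * ∫ x in Ioi b, q₁ x :=
            mul_le_mul_of_nonneg_left hmass_Ioib (by nlinarith)
          linarith
        have h5 : ∫ x in Ioi b, (x ^ 2 * q₁ x - q₁ x) = - ∫ x in Ioi b, f x := by
          rw [← integral_neg]
          refine setIntegral_congr_fun measurableSet_Ioi fun x _ => ?_
          simp only [hfdef]; ring
        have h6 := hIoiIic b
        have h7 : ψ * c / 2 * ε ^ 3 ≤ (b ^ 2 - 1) * ε := by
          nlinarith [mul_le_mul_of_nonneg_left hcb (show (0:ℝ) ≤ ψ * ε ^ 2 / 2 by positivity),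
            mul_le_mul_of_nonneg_right hu hε.le]
        linarith
      · -- middle bound
        have hb2 : b ^ 2 ≤ 5/4 := by nlinarith
        have hb43 : b ≤ 4/3 := by nlinarith
        have h1 := hlow 1 one_pos hb1.le le_rfl
        have h2 : -(b ^ 2 - 1) * (1/2) ≤ ∫ x in Ioc 1 b, f x := by
          have hp : ∀ x ∈ Ioc (1:ℝ) b, -(b ^ 2 - 1) * q₁ x ≤ f x := by
            intro x hx
            have hx2b : x ^ 2 ≤ b ^ 2 := by nlinarith [hx.1, hx.2]
            have h0 := mul_nonneg (sub_nonneg.mpr hx2b) (hq_nonneg x)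
            simp only [hfdef]; nlinarith
          have h3 := setIntegral_mono_on ((hq_int.const_mul (-(b ^ 2 - 1))).integrableOn)
            hf_int.integrableOn measurableSet_Ioc hp
          have h4 : ∫ x in Ioc (1:ℝ) b, -(b ^ 2 - 1) * q₁ x
              = -(b ^ 2 - 1) * ∫ x in Ioc (1:ℝ) b, q₁ x := integral_const_mul _ _
          have h5 : ∫ x in Ioc (1:ℝ) b, q₁ x ≤ 1/2 := by
            have h6 : ∫ x in Ioc (1:ℝ) b, q₁ x ≤ ∫ x in Ioi (0:ℝ), q₁ x :=
              setIntegral_mono_set hq_int.integrableOn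
                (Filter.Eventually.of_forall fun y => hq_nonneg y)
                ((Ioc_subset_Ioi_self.trans (Ioi_subset_Ioi one_pos.le)).eventuallyLE)
            linarith
          have h7 : -(b ^ 2 - 1) * (1/2) ≤ -(b ^ 2 - 1) * ∫ x in Ioc (1:ℝ) b, q₁ x := by
            have h8 := mul_le_mul_of_nonneg_left h5 (show (0:ℝ) ≤ b ^ 2 - 1 by nlinarith)
            linarith
          linarith
        have hsum : ∫ x in Iic b, f x = (∫ x in Ioc 0 1, f x) + ∫ x in Ioc 1 b, f x := by
          have e0 := hIoc 0 b hb.le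
          have e1 := hIoc 0 1 (by norm_num)
          have e2 := hIoc 1 b hb1.le
          rw [hHb_Ioc]; linarith
        have h7 : ψ * c / 2 * ε ^ 3 ≤ ψ * ε * (1 - 1 ^ 3 / 3) + (-(b ^ 2 - 1) * (1/2)) := by
          nlinarith [mul_le_mul_of_nonneg_left hcb (show (0:ℝ) ≤ ψ * ε ^ 2 / 2 by positivity),
            mul_le_mul_of_nonneg_left hε_half (show (0:ℝ) ≤ ψ * b * ε / 2 by positivity),
            mul_le_mul_of_nonneg_left hb43 (show (0:ℝ) ≤ ψ * ε / 4 by positivity)]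
        linarith
  -- final assembly
  have hT_eq : ∫ x in Icc a b, f x
      = (∫ x in Icc a b, q₁ x) - ∫ x in Icc a b, x ^ 2 * q₁ x := by
    simp only [hfdef]
    exact integral_sub hq_int.integrableOn hq_m2.integrableOn
  have hcomp2 : ∫ x in (Icc a b)ᶜ, x ^ 2 * q₁ x = 1 - ∫ x in Icc a b, x ^ 2 * q₁ x := by
    have h1 := integral_add_compl (measurableSet_Icc (a := a) (b := b)) hq_m2
    rw [hq_iso] at h1; linarith
  have hcompmass : ε ≤ 1 - ∫ x in Icc a b, q₁ x := by
    have h1 := integral_add_compl (measurableSet_Icc (a := a) (b := b)) hq_int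
    rw [hq_mass] at h1
    have hsub : Ioi b ⊆ (Icc a b)ᶜ := fun x hx hc => absurd hc.2 (not_le.mpr hx)
    have h2 : ∫ x in Ioi b, q₁ x ≤ ∫ x in (Icc a b)ᶜ, q₁ x :=
      setIntegral_mono_set hq_int.integrableOn
        (Filter.Eventually.of_forall fun y => hq_nonneg y)
        hsub.eventuallyLE
    linarith only [h1, h2, hmass_Ioib]
  have h1M : 0 < 1 - ∫ x in Icc a b, q₁ x := lt_of_lt_of_le hε hcompmass
  rw [lt_div_iff₀ h1M, hcomp2]
  have hKpos : 0 < min (ψ * c / 2) (1 / 8) * ε ^ 3 :=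
    mul_pos (lt_min (by positivity) (by norm_num)) (by positivity)
  have hKT : min (ψ * c / 2) (1 / 8) * ε ^ 3
      ≤ (∫ x in Icc a b, q₁ x) - ∫ x in Icc a b, x ^ 2 * q₁ x := by linarith only [hKb, hTgeHb, hT_eq]
  linarith only [hKT, mul_pos hKpos (lt_of_lt_of_le hε hmass_mid)]
end

section
/- Let q be a symmetric isotropic logconcave density, a < 0 ≤ −a ≤ b, with ∫_a^b q ≥ ε, ∫_b^∞ q ≥ ε, and the mean μ₁ of q restricted to ℝ∖[a,b] satisfying μ₁ ≤ 0 and a ≥ μ₁. Then ∫_{a−2μ₁}^{b} x q(x) dx ≥ |μ₁| ∫_b^∞ q(x) dx. -/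
open MeasureTheory Set Real

private lemma aux_mono_of_logconcave (q : ℝ → ℝ)
    (hq_nonneg : ∀ x, 0 ≤ q x)
    (hq_symm : ∀ x, q (-x) = q x)
    (hq_logconcave : ∀ x y s u : ℝ, 0 ≤ s → 0 ≤ u → s + u = 1 →
      q x ^ s * q y ^ u ≤ q (s * x + u * y)) :
    ∀ x y : ℝ, 0 ≤ x → x ≤ y → q y ≤ q x := by
  intro x y hx hxy
  rcases eq_or_lt_of_le (hx.trans hxy) with h0 | hy0
  · have hx0 : x = 0 := le_antisymm (hxy.trans h0.symm.le) hx
    rw [hx0, ← h0]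
  · set s := (y + x) / (2 * y) with hs_def
    set u := (y - x) / (2 * y) with hu_def
    have hs : 0 ≤ s := by positivity
    have hu : 0 ≤ u := div_nonneg (by linarith) (by linarith)
    have hsu : s + u = 1 := by
      rw [hs_def, hu_def, ← add_div, div_eq_one_iff_eq (by positivity)]; ring
    have hx' : s * y + u * (-y) = x := by
      rw [hs_def, hu_def, div_mul_eq_mul_div, div_mul_eq_mul_div, ← add_div,
        div_eq_iff (by positivity)]; ring
    have h := hq_logconcave y (-y) s u hs hu hsu
    rw [hq_symm, hx'] at h
    calc q y = q y ^ s * q y ^ u := by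
          rw [← Real.rpow_add' (hq_nonneg y) (by rw [hsu]; norm_num), hsu, Real.rpow_one]
      _ ≤ q x := h

private lemma aux_midpoint (q : ℝ → ℝ)
    (hq_nonneg : ∀ x, 0 ≤ q x)
    (hq_int : Integrable q)
    (hq_m1 : Integrable (fun x => x * q x))
    (hmono : ∀ x y : ℝ, 0 ≤ x → x ≤ y → q y ≤ q x)
    (c m : ℝ) (hc : 0 ≤ c) (hcm : c ≤ m) :
    ∫ x in c..(2*m - c), x * q x ≤ m * ∫ x in c..(2*m - c), q x := by
  set d : ℝ := 2*m - c with hd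
  have hmd : m ≤ d := by simp [hd]; linarith
  have hI : ∀ u v : ℝ, IntervalIntegrable (fun x => (x - m) * q x) volume u v := by
    intro u v
    have : Integrable (fun x => (x - m) * q x) := by
      have := hq_m1.sub (hq_int.const_mul m)
      exact this.congr (Filter.Eventually.of_forall fun x => by simp [sub_mul])
    exact this.intervalIntegrable
  have hIq : ∀ u v : ℝ, IntervalIntegrable q volume u v := fun u v => hq_int.intervalIntegrable
  have hg : Integrable (fun y => (m - y) * q y) := by
    have := (hq_int.const_mul m).sub hq_m1
    exact this.congr (Filter.Eventually.of_forall fun x => by simp [sub_mul])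
  have hI3 : IntervalIntegrable (fun x => (x - m) * q (2*m - x)) volume m d := by
    have h := (hg.intervalIntegrable (a := m) (b := c)).comp_sub_left (2*m)
    have he : (fun x => (m - (2*m - x)) * q (2*m - x)) = fun x => (x - m) * q (2*m - x) := by
      ext x; ring_nf
    rw [he] at h
    have h1 : 2*m - m = m := by ring
    have h2 : 2*m - c = d := by rw [hd]
    rwa [h1, h2] at h
  have hA : ∫ x in c..m, (x - m) * q x ≤ 0 := by
    have := intervalIntegral.integral_mono_on hcm (hI c m)
      (_root_.intervalIntegrable_const (c := (0:ℝ)))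
      (fun x hx => mul_nonpos_of_nonpos_of_nonneg (by linarith [hx.2]) (hq_nonneg x))
    simpa using this
  have hB : ∫ x in m..d, (x - m) * q x ≤ ∫ x in m..d, (x - m) * q (2*m - x) := by
    refine intervalIntegral.integral_mono_on hmd (hI m d) hI3 (fun x hx => ?_)
    have h1 : (0:ℝ) ≤ x - m := by linarith [hx.1]
    have h2 : q x ≤ q (2*m - x) :=
      hmono (2*m - x) x (by simp [hd] at hx; linarith [hx.2]) (by linarith [hx.1])
    exact mul_le_mul_of_nonneg_left h2 h1
  have hrefl : ∫ x in m..d, (x - m) * q (2*m - x) = - ∫ x in c..m, (x - m) * q x := by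
    have h := intervalIntegral.integral_comp_sub_left (fun y => (m - y) * q y) (2*m)
      (a := m) (b := d)
    have he : (fun x => (m - (2*m - x)) * q (2*m - x)) = fun x => (x - m) * q (2*m - x) := by
      ext x; ring_nf
    have h1 : 2*m - d = c := by rw [hd]; ring
    have h2 : 2*m - m = m := by ring
    rw [h1, h2] at h
    calc ∫ x in m..d, (x - m) * q (2*m - x)
        = ∫ x in m..d, (fun y => (m - y) * q y) (2*m - x) := by rw [← he]
      _ = ∫ y in c..m, (m - y) * q y := h
      _ = - ∫ x in c..m, (x - m) * q x := by
          rw [← intervalIntegral.integral_neg]; congr 1; ext x; ring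
  have hsplit : ∫ x in c..d, (x - m) * q x
      = (∫ x in c..m, (x - m) * q x) + ∫ x in m..d, (x - m) * q x :=
    (intervalIntegral.integral_add_adjacent_intervals (hI c m) (hI m d)).symm
  have hkey : ∫ x in c..d, (x - m) * q x ≤ 0 := by
    rw [hsplit]
    calc (∫ x in c..m, (x - m) * q x) + ∫ x in m..d, (x - m) * q x
        ≤ (∫ x in c..m, (x - m) * q x) + ∫ x in m..d, (x - m) * q (2*m - x) := by
          linarith [hB]
      _ = 0 := by rw [hrefl]; ring
  have hdecomp : ∫ x in c..d, x * q x
      = (∫ x in c..d, (x - m) * q x) + m * ∫ x in c..d, q x := by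
    rw [← intervalIntegral.integral_const_mul, ← intervalIntegral.integral_add (hI c d)
      ((hIq c d).const_mul m)]
    congr 1; ext x; ring
  linarith [hkey, hdecomp]

/-- **A partial-mean inequality for shifted windows.**  Let `q` be a symmetric isotropic
logconcave probability density on `ℝ`, let `a < 0 ≤ −a ≤ b` with `∫_a^b q ≥ ε` and
`∫_b^∞ q ≥ ε`, and let `μ₁` be the mean of `q` restricted to `ℝ ∖ [a,b]`.
If `μ₁ ≤ 0` and `a ≥ μ₁`, then `∫_{a−2μ₁}^{b} x q(x) dx ≥ |μ₁| ∫_b^∞ q(x) dx`. -/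
theorem partial_mean_shifted_window
    (q : ℝ → ℝ) (ε a b : ℝ) (hε : 0 < ε)
    (hq_nonneg : ∀ x, 0 ≤ q x)
    (hq_int : Integrable q)
    (hq_mass : ∫ x, q x = 1)
    (hq_symm : ∀ x, q (-x) = q x)
    (hq_m1 : Integrable (fun x => x * q x))
    (hq_m2 : Integrable (fun x => x ^ 2 * q x))
    (hq_iso : ∫ x, x ^ 2 * q x = 1)
    (hq_logconcave : ∀ x y s u : ℝ, 0 ≤ s → 0 ≤ u → s + u = 1 →
      q x ^ s * q y ^ u ≤ q (s * x + u * y))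
    (ha : a < 0) (hab : -a ≤ b)
    (hmass_mid : ε ≤ ∫ x in Icc a b, q x)
    (hmass_right : ε ≤ ∫ x in Ici b, q x)
    (μ₁ : ℝ)
    (hμ₁ : μ₁ = (∫ x in (Icc a b)ᶜ, x * q x) / (∫ x in (Icc a b)ᶜ, q x))
    (hμ₁_nonpos : μ₁ ≤ 0) (haμ : μ₁ ≤ a) :
    |μ₁| * ∫ x in Ici b, q x ≤ ∫ x in (a - 2 * μ₁)..b, x * q x := by
  have hmono := aux_mono_of_logconcave q hq_nonneg hq_symm hq_logconcave
  have hxq_int : Integrable (fun x => x * q x) := hq_m1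
  have hab' : a ≤ b := by linarith
  have hb0 : (0:ℝ) ≤ b := by linarith
  -- notation
  set t : ℝ := -μ₁ with htdef
  have ht0 : 0 ≤ t := by simp [htdef]; linarith
  have htc : -a ≤ t := by simp [htdef]; linarith
  set R : ℝ := ∫ x in Ici b, q x with hRdef
  set P : ℝ := ∫ x in Ioi (-a), q x with hPdef
  -- compl splitting
  have hcompl : (Icc a b)ᶜ = Iio a ∪ Ioi b := by
    ext x
    simp only [mem_compl_iff, mem_Icc, mem_union, mem_Iio, mem_Ioi, not_and_or, not_le]
  have hdisj : Disjoint (Iio a) (Ioi b) :=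
    (Iic_disjoint_Ioi hab').mono_left Iio_subset_Iic_self
  have hsplitC : ∀ f : ℝ → ℝ, Integrable f →
      ∫ x in (Icc a b)ᶜ, f x = (∫ x in Iio a, f x) + ∫ x in Ioi b, f x := by
    intro f hf
    rw [hcompl]
    exact setIntegral_union hdisj measurableSet_Ioi hf.integrableOn hf.integrableOn
  -- reflection identities
  have hreflq : ∫ x in Iio a, q x = P := by
    rw [← integral_Iic_eq_integral_Iio, hPdef]
    rw [← integral_comp_neg_Iic a q]
    congr 1; ext x; rw [hq_symm]
  have hreflxq : ∫ x in Iio a, x * q x = - ∫ x in Ioi (-a), x * q x := by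
    rw [← integral_Iic_eq_integral_Iio]
    have h := integral_comp_neg_Iic a (fun x => x * q x)
    have he : ∀ x : ℝ, (-x) * q (-x) = -(x * q x) := by
      intro x; rw [hq_symm]; ring
    calc (∫ x in Iic a, x * q x) = ∫ x in Iic a, -((-x) * q (-x)) := by
          congr 1; ext x; rw [he]; ring
      _ = - ∫ x in Iic a, (-x) * q (-x) := by rw [integral_neg]
      _ = - ∫ x in Ioi (-a), x * q x := by rw [h]
  -- Ioi (-a) splitting
  have hsplitIoi : ∀ f : ℝ → ℝ, Integrable f →
      ∫ x in Ioi (-a), f x = (∫ x in (-a)..b, f x) + ∫ x in Ioi b, f x := by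
    intro f hf
    rw [intervalIntegral.integral_of_le hab, ← Ioc_union_Ioi_eq_Ioi hab]
    exact setIntegral_union (Ioc_disjoint_Ioi le_rfl) measurableSet_Ioi
      hf.integrableOn hf.integrableOn
  have hRIoi : R = ∫ x in Ioi b, q x := by rw [hRdef, integral_Ici_eq_integral_Ioi]
  -- mass of the complement
  set M : ℝ := ∫ x in (Icc a b)ᶜ, q x with hMdef
  have hM : M = P + R := by
    rw [hMdef, hsplitC q hq_int, hreflq, hRIoi]
  have hP0 : 0 ≤ P := setIntegral_nonneg measurableSet_Ioi (fun x _ => hq_nonneg x)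
  have hR0 : 0 < R := lt_of_lt_of_le hε hmass_right
  have hM0 : 0 < M := by rw [hM]; linarith
  -- the mean identity: ∫ in -a..b, x q x = t * M
  have hNum : ∫ x in (Icc a b)ᶜ, x * q x = μ₁ * M := by
    rw [hμ₁, div_mul_cancel₀ _ hM0.ne']
  have hmean : ∫ x in (-a)..b, x * q x = t * M := by
    have h1 : ∫ x in (Icc a b)ᶜ, x * q x
        = (∫ x in Iio a, x * q x) + ∫ x in Ioi b, x * q x := hsplitC _ hxq_int
    have h2 := hsplitIoi (fun x => x * q x) hxq_int
    rw [hreflxq, h2] at h1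
    rw [hNum] at h1
    simp only [htdef]
    linarith
  -- midpoint estimate on [-a, a - 2μ₁]
  have hd_eq : a - 2 * μ₁ = 2 * t - (-a) := by simp [htdef]; ring
  have hmid : ∫ x in (-a)..(a - 2*μ₁), x * q x ≤ t * ∫ x in (-a)..(a - 2*μ₁), q x := by
    rw [hd_eq]
    exact aux_midpoint q hq_nonneg hq_int hq_m1 hmono (-a) t (by linarith) htc
  have had : -a ≤ a - 2*μ₁ := by linarith
  have hqP : ∫ x in (-a)..(a - 2*μ₁), q x ≤ P := by
    rw [intervalIntegral.integral_of_le had, hPdef]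
    exact setIntegral_mono_set hq_int.integrableOn
      (Filter.Eventually.of_forall (fun x => hq_nonneg x))
      (HasSubset.Subset.eventuallyLE Ioc_subset_Ioi_self)
  have hmid' : ∫ x in (-a)..(a - 2*μ₁), x * q x ≤ t * P :=
    le_trans hmid (mul_le_mul_of_nonneg_left hqP ht0)
  -- split the interval
  have hadj : (∫ x in (-a)..(a - 2*μ₁), x * q x) + ∫ x in (a - 2*μ₁)..b, x * q x
      = ∫ x in (-a)..b, x * q x :=
    intervalIntegral.integral_add_adjacent_intervals
      hxq_int.intervalIntegrable hxq_int.intervalIntegrable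
  -- conclude
  have habs : |μ₁| = t := by rw [abs_of_nonpos hμ₁_nonpos]
  have hfin : t * R ≤ ∫ x in (a - 2*μ₁)..b, x * q x := by
    have : ∫ x in (a - 2*μ₁)..b, x * q x
        = t * M - ∫ x in (-a)..(a - 2*μ₁), x * q x := by
      rw [← hmean]; linarith [hadj]
    rw [this, hM]
    have : t * (P + R) = t * P + t * R := by ring
    linarith [hmid']
  calc |μ₁| * ∫ x in Ici b, q x = t * R := by rw [habs, hRdef]
    _ ≤ ∫ x in (a - 2*μ₁)..b, x * q x := hfin
    _ = ∫ x in (a - 2 * μ₁)..b, x * q x := by norm_num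
end

section
/- Let q be a symmetric isotropic logconcave density, [a,b] with |a| ≤ |b| and each of the three regions having q-mass at least ε. If |a+b| < ε^{s+1} for an integer s ≥ 1, then necessarily a < 0 and the mean μ₁ of q restricted to ℝ∖[a,b] satisfies |μ₁| < ε^s ln(1/ε). -/
open MeasureTheory Set Real

private lemma integral_exp_neg_mul_Ioi' {c : ℝ} (hc : 0 < c) (t : ℝ) :
    ∫ x in Ioi t, Real.exp (-(c * x)) = Real.exp (-(c * t)) / c := by
  have h := integral_comp_mul_left_Ioi (fun y => Real.exp (-y)) t hc
  simp only [smul_eq_mul] at h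
  rw [show (fun x => Real.exp (-(c * x))) = (fun x => (fun y => Real.exp (-y)) (c * x)) from rfl]
  rw [h, integral_exp_neg_Ioi]
  rw [div_eq_inv_mul]

private lemma intOn_exp {c : ℝ} (hc : 0 < c) (t : ℝ) :
    IntegrableOn (fun x => Real.exp (-(c * x))) (Ioi t) := by
  simpa [neg_mul] using exp_neg_integrableOn_Ioi t hc

private lemma q_le_q0 {q : ℝ → ℝ} (hq_nonneg : ∀ x, 0 ≤ q x) (hq_symm : ∀ x, q (-x) = q x)
    (hlc : ∀ x y u v : ℝ, 0 ≤ u → 0 ≤ v → u + v = 1 →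
      q x ^ u * q y ^ v ≤ q (u * x + v * y))
    (x : ℝ) : q x ≤ q 0 := by
  have h := hlc x (-x) (1/2) (1/2) (by norm_num) (by norm_num) (by norm_num)
  rw [hq_symm x, show (1/2 : ℝ) * x + (1/2) * (-x) = 0 by ring] at h
  calc q x = q x ^ ((1:ℝ)/2 + 1/2) := by
        rw [show (1:ℝ)/2 + 1/2 = 1 by norm_num, Real.rpow_one]
    _ = q x ^ ((1:ℝ)/2) * q x ^ ((1:ℝ)/2) := Real.rpow_add' (hq_nonneg x) (by norm_num)
    _ ≤ q 0 := h

private lemma q_anti {q : ℝ → ℝ} (hq_nonneg : ∀ x, 0 ≤ q x) (hq_symm : ∀ x, q (-x) = q x)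
    (hlc : ∀ x y u v : ℝ, 0 ≤ u → 0 ≤ v → u + v = 1 →
      q x ^ u * q y ^ v ≤ q (u * x + v * y))
    {x y : ℝ} (hx : 0 ≤ x) (hxy : x ≤ y) : q y ≤ q x := by
  rcases eq_or_lt_of_le hxy with rfl | hlt
  · exact le_rfl
  have hy : 0 < y := lt_of_le_of_lt hx hlt
  have huv : (y + x) / (2*y) + (y - x) / (2*y) = 1 := by field_simp; ring
  have h := hlc y (-y) ((y + x) / (2*y)) ((y - x) / (2*y))
    (by positivity) (div_nonneg (by linarith) (by linarith)) huv
  rw [hq_symm y, show (y + x) / (2*y) * y + (y - x) / (2*y) * (-y) = x by field_simp; ring] at h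
  calc q y = q y ^ ((y + x) / (2*y) + (y - x) / (2*y)) := by rw [huv, Real.rpow_one]
    _ = q y ^ ((y + x) / (2*y)) * q y ^ ((y - x) / (2*y)) :=
        Real.rpow_add' (hq_nonneg y) (by rw [huv]; exact one_ne_zero)
    _ ≤ q x := h

private lemma key_extrap {q : ℝ → ℝ} (hq_nonneg : ∀ x, 0 ≤ q x)
    (hlc : ∀ x y u v : ℝ, 0 ≤ u → 0 ≤ v → u + v = 1 →
      q x ^ u * q y ^ v ≤ q (u * x + v * y))
    {x₁ x : ℝ} (hx₁ : 0 < x₁) (hx : x₁ < x) (hM : 0 < q 0)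
    (hqx : q 0 * Real.exp (-(2 * q 0 * x)) ≤ q x) :
    q 0 * Real.exp (-(2 * q 0 * x₁)) ≤ q x₁ := by
  have hxpos : 0 < x := hx₁.trans hx
  set M := q 0 with hMdef
  set u := x₁ / x with hu
  have hu0 : 0 < u := div_pos hx₁ hxpos
  have hu1 : u < 1 := (div_lt_one hxpos).2 hx
  have h := hlc x 0 u (1 - u) hu0.le (by linarith) (by ring)
  rw [show u * x + (1 - u) * 0 = x₁ by rw [hu]; field_simp; ring] at h
  refine le_trans (le_of_eq ?_) (le_trans (mul_le_mul_of_nonneg_right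
    (Real.rpow_le_rpow (by positivity) hqx hu0.le) (Real.rpow_nonneg (hq_nonneg 0) _)) h)
  rw [Real.mul_rpow hM.le (Real.exp_pos _).le, ← Real.exp_mul,
    show (-(2 * M * x)) * u = -(2 * M * x₁) by rw [hu]; field_simp]
  rw [show M ^ u * Real.exp (-(2 * M * x₁)) * M ^ (1-u) = (M ^ u * M ^ (1-u)) * Real.exp (-(2 * M * x₁)) by ring,
    ← Real.rpow_add hM, show u + (1-u) = 1 by ring, Real.rpow_one]

private lemma half_integral {f : ℝ → ℝ} (hf : Integrable f) (hsymm : ∀ x, f (-x) = f x) :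
    ∫ x in Ioi (0:ℝ), f x = (∫ x, f x) / 2 := by
  have h1 : ∫ x in Ioi (0:ℝ), f (-x) = ∫ x in Iic (-(0:ℝ)), f x := integral_comp_neg_Ioi 0 f
  simp only [neg_zero] at h1
  simp_rw [hsymm] at h1
  have h3 := intervalIntegral.integral_Iic_add_Ioi (b := (0:ℝ)) hf.integrableOn hf.integrableOn
  linarith

private lemma tail_bound {q : ℝ → ℝ} (hq_nonneg : ∀ x, 0 ≤ q x) (hq_int : Integrable q)
    (hlc : ∀ x y u v : ℝ, 0 ≤ u → 0 ≤ v → u + v = 1 →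
      q x ^ u * q y ^ v ≤ q (u * x + v * y))
    (hhalf : ∫ x in Ioi (0:ℝ), q x = 1/2) (hM : 0 < q 0)
    {t : ℝ} (ht : 0 ≤ t) :
    ∫ x in Ioi t, q x ≤ Real.exp (-(2 * q 0 * t)) / 2 := by
  set M := q 0 with hMdef
  have h2M : 0 < 2 * M := by positivity
  set E : ℝ → ℝ := fun x => M * Real.exp (-(2 * M * x)) with hE
  have hEint : ∀ r : ℝ, IntegrableOn E (Ioi r) := by
    intro r
    have := (intOn_exp h2M r).const_mul M
    simp [hE, mul_assoc] at this ⊢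
    exact this
  have hEval : ∀ r : ℝ, ∫ x in Ioi r, E x = Real.exp (-(2 * M * r)) / 2 := by
    intro r
    rw [hE]
    simp only []
    rw [MeasureTheory.integral_const_mul, show (fun x => Real.exp (-(2 * M * x)))
        = (fun x => Real.exp (-((2*M) * x))) by ext x; ring_nf,
      integral_exp_neg_mul_Ioi' h2M r]
    field_simp
  by_cases hcase : ∀ x ∈ Icc 0 t, E x ≤ q x
  · have hsplitq : (∫ x in Ioc 0 t, q x) + ∫ x in Ioi t, q x = 1/2 := by
      have hu := MeasureTheory.setIntegral_union (f := q) (μ := volume)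
        (Ioc_disjoint_Ioi (le_refl t)) measurableSet_Ioi
        (hq_int.integrableOn (s := Ioc 0 t)) (hq_int.integrableOn (s := Ioi t))
      rw [Ioc_union_Ioi_eq_Ioi ht, hhalf] at hu
      have hu' : (1:ℝ)/2 = (∫ x in Ioc 0 t, q x) + ∫ x in Ioi t, q x := hu
      linarith
    have hE0 : ∫ x in Ioi (0:ℝ), E x = 1/2 := by
      rw [hEval 0]; norm_num
    have hsplitE : (∫ x in Ioc 0 t, E x) + ∫ x in Ioi t, E x = 1/2 := by
      have hu := MeasureTheory.setIntegral_union (f := E) (μ := volume)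
        (Ioc_disjoint_Ioi (le_refl t)) measurableSet_Ioi
        ((hEint 0).mono_set Ioc_subset_Ioi_self) (hEint t)
      rw [Ioc_union_Ioi_eq_Ioi ht, hE0] at hu
      have hu' : (1:ℝ)/2 = (∫ x in Ioc 0 t, E x) + ∫ x in Ioi t, E x := hu
      linarith
    have hcomp : ∫ x in Ioc 0 t, E x ≤ ∫ x in Ioc 0 t, q x :=
      setIntegral_mono_on ((hEint 0).mono_set Ioc_subset_Ioi_self) hq_int.integrableOn
        measurableSet_Ioc (fun x hx => hcase x ⟨hx.1.le, hx.2⟩)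
    have := hEval t
    linarith
  · push_neg at hcase
    obtain ⟨x₁, hx₁mem, hx₁⟩ := hcase
    have hx₁pos : 0 < x₁ := by
      rcases hx₁mem.1.eq_or_lt with h0 | h0
      · exfalso
        rw [← h0] at hx₁
        simp [hE] at hx₁
        exact lt_irrefl _ hx₁
      · exact h0
    have hpt : ∀ x ∈ Ioi t, q x ≤ E x := by
      intro x hx
      by_contra hcon
      push_neg at hcon
      exact absurd (key_extrap hq_nonneg hlc hx₁pos (lt_of_le_of_lt hx₁mem.2 hx) hM hcon.le)
        (not_le.2 hx₁)
    calc ∫ x in Ioi t, q x ≤ ∫ x in Ioi t, E x :=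
          setIntegral_mono_on hq_int.integrableOn (hEint t) measurableSet_Ioi hpt
      _ = _ := hEval t

private lemma M_bound {q : ℝ → ℝ} (hq_nonneg : ∀ x, 0 ≤ q x) (hq_int : Integrable q)
    (hq_mass : ∫ x, q x = 1) (hq_symm : ∀ x, q (-x) = q x)
    (hq_m2 : Integrable (fun x => x ^ 2 * q x)) (hq_iso : ∫ x, x ^ 2 * q x = 1)
    (hlc : ∀ x y u v : ℝ, 0 ≤ u → 0 ≤ v → u + v = 1 →
      q x ^ u * q y ^ v ≤ q (u * x + v * y))
    (hM : 0 < q 0) : q 0 < 3 := by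
  set M := q 0 with hMdef
  have hhalf : ∫ x in Ioi (0:ℝ), q x = 1/2 := by
    rw [half_integral hq_int hq_symm, hq_mass]
  have htail : ∀ t : ℝ, 0 ≤ t → ∫ x in Ioi t, q x ≤ Real.exp (-(2 * M * t)) / 2 :=
    fun t ht => tail_bound hq_nonneg hq_int hlc hhalf hM ht
  -- pointwise decay
  have hpt : ∀ x : ℝ, 0 < x → q x * x ≤ Real.exp (-(M * x)) := by
    intro x hx
    have h0 : (x - x/2) * q x ≤ ∫ y in Ioc (x/2) x, q y := by
      have hc : ∫ y in Ioc (x/2) x, (fun _ => q x) y = (x - x/2) * q x := by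
        rw [setIntegral_const, Real.volume_real_Ioc_of_le (by linarith), smul_eq_mul]
      rw [← hc]
      exact setIntegral_mono_on
        (integrableOn_const (by rw [Real.volume_Ioc]; exact ENNReal.ofReal_ne_top))
        hq_int.integrableOn measurableSet_Ioc
        (fun y hy => q_anti hq_nonneg hq_symm hlc (by linarith [hy.1]) hy.2)
    have h2 : ∫ y in Ioc (x/2) x, q y ≤ ∫ y in Ioi (x/2), q y :=
      setIntegral_mono_set hq_int.integrableOn
        (Filter.Eventually.of_forall fun y => hq_nonneg y)
        (HasSubset.Subset.eventuallyLE Ioc_subset_Ioi_self)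
    have h3 := htail (x/2) (by linarith)
    rw [show -(2 * M * (x/2)) = -(M * x) by ring] at h3
    have := le_trans h0 (le_trans h2 h3)
    nlinarith [this]
  -- second moment over the half line
  have hhalf2 : ∫ x in Ioi (0:ℝ), x ^ 2 * q x = 1/2 := by
    rw [half_integral hq_m2 (fun x => by rw [hq_symm x, show ((-x):ℝ)^2 = x^2 by ring]), hq_iso]
  set T := 1/M with hT
  have hTpos : 0 < T := by positivity
  have hM2 : 0 < M/2 := by positivity
  have hsplit : (∫ x in Ioc 0 T, x ^ 2 * q x) + ∫ x in Ioi T, x ^ 2 * q x = 1/2 := by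
    have hu := MeasureTheory.setIntegral_union (f := fun x => x ^ 2 * q x) (μ := volume)
      (Ioc_disjoint_Ioi (le_refl T)) measurableSet_Ioi
      (hq_m2.integrableOn (s := Ioc 0 T)) (hq_m2.integrableOn (s := Ioi T))
    rw [Ioc_union_Ioi_eq_Ioi hTpos.le, hhalf2] at hu
    have hu' : (1:ℝ)/2 = (∫ x in Ioc 0 T, x ^ 2 * q x) + ∫ x in Ioi T, x ^ 2 * q x := hu
    linarith
  have hb1 : ∫ x in Ioc 0 T, x ^ 2 * q x ≤ 1/(3*M^2) := by
    have hmono : ∫ x in Ioc 0 T, x ^ 2 * q x ≤ ∫ x in Ioc 0 T, M * x ^ 2 :=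
      setIntegral_mono_on hq_m2.integrableOn
        ((continuous_const.mul (continuous_pow 2)).integrableOn_Ioc) measurableSet_Ioc
        (fun y _ => by nlinarith [q_le_q0 hq_nonneg hq_symm hlc y, sq_nonneg y, hq_nonneg y])
    have hval : ∫ x in Ioc 0 T, M * x ^ 2 = 1/(3*M^2) := by
      rw [← intervalIntegral.integral_of_le hTpos.le, intervalIntegral.integral_const_mul,
        integral_pow]
      rw [hT]
      field_simp
      rw [show M ^ 3 * ((1 / M) ^ (2 + 1) - 0 ^ (2 + 1)) * 3 = (M * (1/M)) ^ 3 * 3 by ring,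
        mul_one_div_cancel hM.ne']
      norm_num
    linarith
  have hb2 : ∫ x in Ioi T, x ^ 2 * q x ≤ (16/15)/M^2 := by
    have he1 : (5:ℝ)/2 < Real.exp 1 := lt_trans (by norm_num) Real.exp_one_gt_d9
    have he2 : Real.exp (-(1/2:ℝ)) ≤ 2/3 := by
      rw [Real.exp_neg]
      have h32 : (3:ℝ)/2 ≤ Real.exp (1/2) := by
        have := Real.add_one_le_exp (1/2:ℝ); linarith
      calc (Real.exp (1/2))⁻¹ ≤ ((3:ℝ)/2)⁻¹ := inv_anti₀ (by norm_num) h32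
        _ = 2/3 := by norm_num
    have hmono : ∫ x in Ioi T, x ^ 2 * q x
        ≤ ∫ x in Ioi T, (2 * Real.exp (-1) / M) * Real.exp (-(M/2 * x)) := by
      refine setIntegral_mono_on hq_m2.integrableOn ((intOn_exp hM2 T).const_mul _)
        measurableSet_Ioi (fun x hx => ?_)
      have hxT : T < x := hx
      have hxpos : 0 < x := lt_trans hTpos hxT
      have hdecay := hpt x hxpos
      have hkey : (M/2 * x) * Real.exp (-(M/2 * x)) ≤ Real.exp (-1) := by
        have h1 : M/2 * x ≤ Real.exp (M/2 * x - 1) := by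
          have := Real.add_one_le_exp (M/2 * x - 1); linarith
        have h2 := mul_le_mul_of_nonneg_right h1 (Real.exp_pos (-(M/2 * x))).le
        rw [← Real.exp_add] at h2
        rw [show M/2 * x - 1 + -(M/2 * x) = -1 by ring] at h2
        exact h2
      have hxe : x * Real.exp (-(M/2 * x)) ≤ 2 * Real.exp (-1) / M := by
        rw [le_div_iff₀ hM]
        nlinarith [hkey]
      have hsplitexp : Real.exp (-(M * x)) = Real.exp (-(M/2 * x)) * Real.exp (-(M/2 * x)) := by
        rw [← Real.exp_add]; ring_nf
      have hq_le : q x * x ^ 2 ≤ x * Real.exp (-(M * x)) := by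
        have := mul_le_mul_of_nonneg_right hdecay hxpos.le
        calc q x * x ^ 2 = q x * x * x := by ring
          _ ≤ Real.exp (-(M * x)) * x := this
          _ = x * Real.exp (-(M * x)) := by ring
      calc x ^ 2 * q x = q x * x ^ 2 := by ring
        _ ≤ x * Real.exp (-(M * x)) := hq_le
        _ = (x * Real.exp (-(M/2 * x))) * Real.exp (-(M/2 * x)) := by
            rw [hsplitexp]; ring
        _ ≤ (2 * Real.exp (-1) / M) * Real.exp (-(M/2 * x)) := by
            apply mul_le_mul_of_nonneg_right hxe (Real.exp_pos _).le
    have hval : ∫ x in Ioi T, (2 * Real.exp (-1) / M) * Real.exp (-(M/2 * x))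
        = (2 * Real.exp (-1) / M) * (Real.exp (-(1/2)) / (M/2)) := by
      rw [MeasureTheory.integral_const_mul, integral_exp_neg_mul_Ioi' hM2,
        show M/2 * T = 1/2 by rw [hT]; field_simp]
    have hle : (2 * Real.exp (-1) / M) * (Real.exp (-(1/2)) / (M/2)) ≤ (16/15)/M^2 := by
      have hexp1 : Real.exp (-1) = (Real.exp 1)⁻¹ := Real.exp_neg 1
      have h1 : Real.exp (-1) ≤ 2/5 := by
        rw [hexp1]
        calc (Real.exp 1)⁻¹ ≤ ((5:ℝ)/2)⁻¹ := inv_anti₀ (by norm_num) he1.le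
          _ = 2/5 := by norm_num
      have hepos := Real.exp_pos (-1:ℝ)
      have hepos2 := Real.exp_pos (-(1/2:ℝ))
      have hAB : Real.exp (-1) * Real.exp (-(1/2:ℝ)) ≤ 4/15 := by
        nlinarith [h1, he2, hepos.le, hepos2.le]
      have heq : 2 * Real.exp (-1) / M * (Real.exp (-(1/2)) / (M/2))
          = 4 * (Real.exp (-1) * Real.exp (-(1/2))) / M^2 := by
        field_simp
        ring
      rw [heq]
      have hM2pos : (0:ℝ) < M^2 := by positivity
      rw [div_le_div_iff₀ hM2pos hM2pos]
      nlinarith [hAB, hM2pos]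
    exact le_trans hmono (le_trans (le_of_eq hval) hle)
  have hcomb : (1:ℝ)/2 ≤ 1/(3*M^2) + 16/15/M^2 := by linarith
  have hM2pos : (0:ℝ) < M^2 := by positivity
  have h1 : 1/(3*M^2) * M^2 = 1/3 := by field_simp
  have h2 : (16:ℝ)/15/M^2 * M^2 = 16/15 := by field_simp
  have h3 := mul_le_mul_of_nonneg_right hcomb hM2pos.le
  rw [add_mul, h1, h2] at h3
  nlinarith [h3, sq_nonneg (M - 3)]

/-- **Near-symmetric bands have small restricted mean.**  Let `q` be a symmetric
isotropic logconcave probability density on `ℝ`, `[a,b]` a band with `|a| ≤ |b|` whose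
three regions `(−∞,a]`, `[a,b]`, `[b,∞)` each carry `q`-mass at least `ε`.  If
`|a + b| < ε^{s+1}` for an integer `s ≥ 1`, then `a < 0` and the mean `μ₁` of `q`
restricted to `ℝ ∖ [a,b]` satisfies `|μ₁| < ε^s ln(1/ε)`. -/
theorem near_symmetric_band_small_mean
    (q : ℝ → ℝ) (ε a b : ℝ) (s : ℕ) (hε : 0 < ε) (hs : 1 ≤ s)
    (hq_nonneg : ∀ x, 0 ≤ q x)
    (hq_int : Integrable q)
    (hq_mass : ∫ x, q x = 1)
    (hq_symm : ∀ x, q (-x) = q x)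
    (hq_m1 : Integrable (fun x => x * q x))
    (hq_m2 : Integrable (fun x => x ^ 2 * q x))
    (hq_iso : ∫ x, x ^ 2 * q x = 1)
    (hq_logconcave : ∀ x y u v : ℝ, 0 ≤ u → 0 ≤ v → u + v = 1 →
      q x ^ u * q y ^ v ≤ q (u * x + v * y))
    (hab : |a| ≤ |b|)
    (hmass_left : ε ≤ ∫ x in Iic a, q x)
    (hmass_mid : ε ≤ ∫ x in Icc a b, q x)
    (hmass_right : ε ≤ ∫ x in Ici b, q x)
    (hsum : |a + b| < ε ^ (s + 1))
    (μ₁ : ℝ)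
    (hμ₁ : μ₁ = (∫ x in (Icc a b)ᶜ, x * q x) / (1 - ∫ x in Icc a b, q x)) :
    a < 0 ∧ |μ₁| < ε ^ s * Real.log (1 / ε) := by
  set M := q 0 with hMdef
  have hM : 0 < M := by
    by_contra h
    push_neg at h
    have hq0 : ∀ x, q x = 0 := fun x =>
      le_antisymm (le_trans (q_le_q0 hq_nonneg hq_symm hq_logconcave x) h) (hq_nonneg x)
    have hzero : ∫ (x : ℝ), q x = 0 := by simp only [hq0]; exact integral_zero ℝ ℝ
    rw [hq_mass] at hzero
    norm_num at hzero
  have hhalf : ∫ x in Ioi (0:ℝ), q x = 1/2 := by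
    rw [half_integral hq_int hq_symm, hq_mass]
  have hM3 : M < 3 :=
    M_bound hq_nonneg hq_int hq_mass hq_symm hq_m2 hq_iso hq_logconcave hM
  have haltb : a < b := by
    by_contra h
    push_neg at h
    have hvol : volume (Icc a b) = 0 := by
      rw [Real.volume_Icc]
      exact ENNReal.ofReal_eq_zero.2 (by linarith)
    have hz : ∫ x in Icc a b, q x = 0 := by
      exact MeasureTheory.setIntegral_measure_zero _ hvol
    linarith [hmass_mid]
  have hmidle : ∫ x in Icc a b, q x ≤ M * (b - a) := by
    have h1 : ∫ x in Icc a b, q x ≤ ∫ x in Icc a b, (fun _ => M) x :=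
      setIntegral_mono_on hq_int.integrableOn
        (integrableOn_const (by rw [Real.volume_Icc]; exact ENNReal.ofReal_ne_top))
        measurableSet_Icc (fun y _ => q_le_q0 hq_nonneg hq_symm hq_logconcave y)
    have h2 : ∫ x in Icc a b, (fun _ => M) x = M * (b - a) := by
      rw [setIntegral_const, Real.volume_real_Icc_of_le haltb.le, smul_eq_mul,
        mul_comm]
    linarith
  have hsum3 : (∫ x in Iic a, q x) + (∫ x in Icc a b, q x) + (∫ x in Ici b, q x) = 1 := by
    have e1 : ∫ x in Icc a b, q x = ∫ x in Ioc a b, q x := integral_Icc_eq_integral_Ioc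
    have e2 : ∫ x in Ici b, q x = ∫ x in Ioi b, q x := integral_Ici_eq_integral_Ioi
    have hu := MeasureTheory.setIntegral_union (f := q) (μ := volume)
      (Ioc_disjoint_Ioi (le_refl b)) measurableSet_Ioi
      (hq_int.integrableOn (s := Ioc a b)) (hq_int.integrableOn (s := Ioi b))
    rw [Ioc_union_Ioi_eq_Ioi haltb.le] at hu
    have hu' : ∫ x in Ioi a, q x = (∫ x in Ioc a b, q x) + ∫ x in Ioi b, q x := hu
    have h2 := intervalIntegral.integral_Iic_add_Ioi (b := a)
      (hq_int.integrableOn (s := Iic a)) (hq_int.integrableOn (s := Ioi a))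
    rw [hq_mass] at h2
    rw [e1, e2]
    linarith
  have hepsle : 3 * ε ≤ 1 := by linarith [hmass_left, hmass_mid, hmass_right]
  have hεlt1 : ε < 1 := by linarith
  have hεs : ε ^ s ≤ ε := by
    calc ε ^ s ≤ ε ^ 1 := pow_le_pow_of_le_one hε.le (by linarith) hs
      _ = ε := pow_one ε
  have hεs1 : ε ^ (s+1) = ε ^ s * ε := pow_succ ε s
  have ha : a < 0 := by
    by_contra h
    push_neg at h
    have habs0 : |a + b| = a + b := abs_of_pos (by linarith)
    have hlt : ε < M * ε ^ (s+1) := by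
      calc ε ≤ ∫ x in Icc a b, q x := hmass_mid
        _ ≤ M * (b - a) := hmidle
        _ ≤ M * (a + b) := by nlinarith
        _ < M * ε ^ (s+1) := by
            apply mul_lt_mul_of_pos_left _ hM
            rw [← habs0]; exact hsum
    have h1 : M * ε ^ (s+1) ≤ M * (ε * ε) := by
      apply mul_le_mul_of_nonneg_left _ hM.le
      rw [hεs1]
      exact mul_le_mul_of_nonneg_right hεs hε.le
    nlinarith
  have hb : 0 < b := by
    rcases le_or_gt b 0 with hb0 | hb0
    · exfalso
      rw [abs_of_neg ha, abs_of_nonpos hb0] at hab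
      linarith
    · exact hb0
  have hab2 : 0 ≤ a + b := by
    rw [abs_of_neg ha, abs_of_pos hb] at hab
    linarith
  rw [abs_of_nonneg hab2] at hsum
  have htail := tail_bound hq_nonneg hq_int hq_logconcave hhalf hM (t := b) hb.le
  have hL : 0 < Real.log (1 / ε) := Real.log_pos (by rw [lt_div_iff₀ hε]; linarith)
  have hMb2 : M * b ≤ 2 * Real.log (1 / ε) := by
    have h1 : ε ≤ Real.exp (-(2*M*b))/2 := by
      refine le_trans hmass_right ?_
      rw [integral_Ici_eq_integral_Ioi]
      exact htail
    have h2 : 2*ε ≤ Real.exp (-(2*M*b)) := by linarith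
    have h3 := Real.log_le_log (by positivity) h2
    rw [Real.log_exp] at h3
    have h4 : Real.log (2*ε) = Real.log 2 + Real.log ε := Real.log_mul (by norm_num) hε.ne'
    have h5 : Real.log (1/ε) = - Real.log ε := by rw [one_div, Real.log_inv]
    have hlog2 : 0 < Real.log 2 := Real.log_pos (by norm_num)
    linarith
  have hden : 2*ε ≤ 1 - ∫ x in Icc a b, q x := by linarith [hmass_left, hmass_right]
  have hdenpos : 0 < 1 - ∫ x in Icc a b, q x := by linarith
  -- numerator analysis
  have hoddpt : ∀ x : ℝ, (-x) * q (-x) = -(x * q x) := fun x => by rw [hq_symm]; ring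
  have htot : ∫ x, x * q x = 0 := by
    have h1 : ∫ x in Ioi (0:ℝ), (fun x => x * q x) (-x) = ∫ x in Iic (0:ℝ), x * q x := by
      have := integral_comp_neg_Ioi (0:ℝ) (fun x => x * q x)
      simpa using this
    have h1' : ∫ x in Ioi (0:ℝ), (fun x => x * q x) (-x) = - ∫ x in Ioi (0:ℝ), x * q x := by
      simp only [hoddpt]
      exact integral_neg _
    have h2 := intervalIntegral.integral_Iic_add_Ioi (b := (0:ℝ))
      (hq_m1.integrableOn (s := Iic 0)) (hq_m1.integrableOn (s := Ioi 0))
    have h2' : (∫ x in Iic (0:ℝ), x * q x) + (∫ x in Ioi (0:ℝ), x * q x) = ∫ x, x * q x := h2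
    linarith
  have hcompl : ∫ x in (Icc a b)ᶜ, x * q x = - ∫ x in Icc a b, x * q x := by
    have h := MeasureTheory.integral_add_compl (measurableSet_Icc (a := a) (b := b)) hq_m1
    have h' : (∫ x in Icc a b, x * q x) + (∫ x in (Icc a b)ᶜ, x * q x) = ∫ x, x * q x := h
    rw [htot] at h'
    linarith
  have hJ : ∫ x in (-b)..b, x * q x = 0 := by
    have hcn := intervalIntegral.integral_comp_neg (a := -b) (b := b) (fun x => x * q x)
    simp only [neg_neg] at hcn
    have hneg : ∫ x in (-b)..b, (fun x => x * q x) (-x) = - ∫ x in (-b)..b, x * q x := by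
      simp only [hoddpt]
      exact intervalIntegral.integral_neg
    rw [hneg] at hcn
    linarith
  have hsplitJ : (∫ x in (-b)..a, x * q x) + ∫ x in a..b, x * q x = 0 := by
    rw [intervalIntegral.integral_add_adjacent_intervals hq_m1.intervalIntegrable
      hq_m1.intervalIntegrable, hJ]
  have hIccInt : ∫ x in Icc a b, x * q x = ∫ x in a..b, x * q x := by
    rw [intervalIntegral.integral_of_le haltb.le, integral_Icc_eq_integral_Ioc]
  have hgap : |∫ x in (-b)..a, x * q x| ≤ b * M * (a + b) := by
    have hCle : ∀ x ∈ Set.uIoc (-b) a, ‖x * q x‖ ≤ b * M := by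
      intro x hx
      have hxm : x ∈ Ioc (-b) a := by rwa [Set.uIoc_of_le (by linarith : -b ≤ a)] at hx
      have hxb : |x| ≤ b := abs_le.2 ⟨by linarith [hxm.1], by linarith [hxm.2]⟩
      rw [Real.norm_eq_abs, abs_mul, abs_of_nonneg (hq_nonneg x)]
      exact mul_le_mul hxb (q_le_q0 hq_nonneg hq_symm hq_logconcave x) (hq_nonneg x)
        (by linarith)
    have h := intervalIntegral.norm_integral_le_of_norm_le_const hCle
    rw [Real.norm_eq_abs,
      (by rw [show a - (-b) = a + b by ring]; exact abs_of_nonneg hab2 : |a - (-b)| = a + b)] at h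
    linarith
  have hnum : |∫ x in (Icc a b)ᶜ, x * q x| < b * M * ε ^ (s+1) := by
    rw [hcompl, abs_neg, hIccInt,
      show (∫ x in a..b, x * q x) = - ∫ x in (-b)..a, x * q x by linarith, abs_neg]
    calc |∫ x in (-b)..a, x * q x| ≤ b * M * (a + b) := hgap
      _ < b * M * ε ^ (s+1) := by
          exact mul_lt_mul_of_pos_left hsum (by positivity)
  refine ⟨ha, ?_⟩
  rw [hμ₁, abs_div, abs_of_pos hdenpos, div_lt_iff₀ hdenpos]
  calc |∫ x in (Icc a b)ᶜ, x * q x| < b * M * ε ^ (s+1) := hnum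
    _ ≤ (2 * Real.log (1/ε)) * ε ^ (s+1) := by
        apply mul_le_mul_of_nonneg_right _ (by positivity)
        rw [mul_comm b M]
        exact hMb2
    _ = ε ^ s * Real.log (1/ε) * (2*ε) := by rw [hεs1]; ring
    _ ≤ ε ^ s * Real.log (1/ε) * (1 - ∫ x in Icc a b, q x) := by
        exact mul_le_mul_of_nonneg_left hden
          (mul_nonneg (pow_nonneg hε.le s) hL.le)
end

section
/- Let q be a symmetric isotropic logconcave density, b > 0, and let σ₂² = (∫_b^∞ x²q)/(∫_b^∞ q) be the variance of q restricted to ℝ∖[−b,b]. Then σ₂² is monotonically increasing in b, and σ₂² ≥ 1 for all b > 0. -/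
open MeasureTheory Set Real

private lemma key_ineq (q : ℝ → ℝ)
    (hq_nonneg : ∀ x, 0 ≤ q x)
    (hq_int : Integrable q)
    (hq_m2 : Integrable (fun x => x ^ 2 * q x))
    {a b : ℝ} (ha : 0 ≤ a) (hab : a ≤ b) :
    (∫ x in Ici a, x ^ 2 * q x) * (∫ x in Ici b, q x) ≤
      (∫ x in Ici b, x ^ 2 * q x) * (∫ x in Ici a, q x) := by
  have hunion : Ico a b ∪ Ici b = Ici a := Ico_union_Ici_eq_Ici hab
  have hdisj : Disjoint (Ico a b) (Ici b) := Set.disjoint_left.mpr fun x hx hx' => absurd hx' (not_le.mpr hx.2)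
  have h1 : (∫ x in Ici a, q x) = (∫ x in Ico a b, q x) + ∫ x in Ici b, q x := by
    rw [← hunion, setIntegral_union hdisj measurableSet_Ici
      hq_int.integrableOn hq_int.integrableOn]
  have h2 : (∫ x in Ici a, x ^ 2 * q x)
      = (∫ x in Ico a b, x ^ 2 * q x) + ∫ x in Ici b, x ^ 2 * q x := by
    rw [← hunion, setIntegral_union hdisj measurableSet_Ici
      hq_m2.integrableOn hq_m2.integrableOn]
  set A := ∫ x in Ico a b, q x with hA
  set A2 := ∫ x in Ico a b, x ^ 2 * q x with hA2
  set B := ∫ x in Ici b, q x with hB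
  set B2 := ∫ x in Ici b, x ^ 2 * q x with hB2
  have hAnn : 0 ≤ A := setIntegral_nonneg measurableSet_Ico fun x _ => hq_nonneg x
  have hBnn : 0 ≤ B := setIntegral_nonneg measurableSet_Ici fun x _ => hq_nonneg x
  have hA2le : A2 ≤ b ^ 2 * A := by
    rw [hA2, hA, ← integral_const_mul]
    refine setIntegral_mono_on hq_m2.integrableOn
      (hq_int.integrableOn.const_mul _) measurableSet_Ico ?_
    intro x hx
    have hx2 : x ^ 2 ≤ b ^ 2 := by
      have h0x : 0 ≤ x := le_trans ha hx.1
      have := pow_le_pow_left₀ h0x (le_of_lt hx.2) 2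
      exact this
    exact mul_le_mul_of_nonneg_right hx2 (hq_nonneg x)
  have hB2ge : b ^ 2 * B ≤ B2 := by
    rw [hB2, hB, ← integral_const_mul]
    refine setIntegral_mono_on (hq_int.integrableOn.const_mul _)
      hq_m2.integrableOn measurableSet_Ici ?_
    intro x hx
    have hx2 : b ^ 2 ≤ x ^ 2 := pow_le_pow_left₀ (le_trans ha hab) hx 2
    exact mul_le_mul_of_nonneg_right hx2 (hq_nonneg x)
  rw [h1, h2]
  nlinarith [mul_le_mul_of_nonneg_right hA2le hBnn,
    mul_le_mul_of_nonneg_right hB2ge hAnn]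

/-- **Monotonicity of the truncated variance.**  Let `q` be a symmetric isotropic
logconcave probability density on `ℝ` and, for `b > 0` within the support (i.e. with
`∫_b^∞ q > 0`), let `σ₂²(b) = (∫_b^∞ x² q)/(∫_b^∞ q)` be the variance of `q` restricted
to `ℝ ∖ [−b,b]`.  Then `σ₂²` is monotonically increasing in `b` and `σ₂²(b) ≥ 1`. -/
theorem truncated_variance_monotone
    (q : ℝ → ℝ)
    (hq_nonneg : ∀ x, 0 ≤ q x)
    (hq_int : Integrable q)
    (hq_mass : ∫ x, q x = 1)
    (hq_symm : ∀ x, q (-x) = q x)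
    (hq_m2 : Integrable (fun x => x ^ 2 * q x))
    (hq_iso : ∫ x, x ^ 2 * q x = 1)
    (hq_logconcave : ∀ x y u v : ℝ, 0 ≤ u → 0 ≤ v → u + v = 1 →
      q x ^ u * q y ^ v ≤ q (u * x + v * y)) :
    MonotoneOn (fun b : ℝ => (∫ x in Ici b, x ^ 2 * q x) / (∫ x in Ici b, q x))
        {b : ℝ | 0 < b ∧ 0 < ∫ x in Ici b, q x} ∧
      ∀ b : ℝ, 0 < b → 0 < (∫ x in Ici b, q x) →
        1 ≤ (∫ x in Ici b, x ^ 2 * q x) / (∫ x in Ici b, q x) := by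
  constructor
  · intro a ha b hb hab
    simp only [mem_setOf_eq] at ha hb
    rw [div_le_div_iff₀ ha.2 hb.2]
    exact key_ineq q hq_nonneg hq_int hq_m2 ha.1.le hab
  · intro b hb hbq
    -- half integrals are 1/2
    have hq_even : ∀ x, q |x| = q x := by
      intro x
      rcases abs_cases x with ⟨h, _⟩ | ⟨h, _⟩
      · rw [h]
      · rw [h, hq_symm]
    have hm2_even : ∀ x : ℝ, |x| ^ 2 * q |x| = x ^ 2 * q x := by
      intro x; rw [sq_abs, hq_even]
    have hhalf1 : (∫ x in Ici (0 : ℝ), q x) = 1 / 2 := by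
      have := integral_comp_abs (f := q)
      rw [integral_congr_ae (Filter.Eventually.of_forall hq_even), hq_mass] at this
      rw [integral_Ici_eq_integral_Ioi]
      linarith
    have hhalf2 : (∫ x in Ici (0 : ℝ), x ^ 2 * q x) = 1 / 2 := by
      have := integral_comp_abs (f := fun x => x ^ 2 * q x)
      simp only [hm2_even] at this
      rw [hq_iso] at this
      rw [integral_Ici_eq_integral_Ioi]
      linarith
    have key := key_ineq q hq_nonneg hq_int hq_m2 (le_refl (0 : ℝ)) hb.le
    rw [hhalf1, hhalf2] at key
    rw [le_div_iff₀ hbq]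
    linarith
end
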